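/- arXiv:1910.13885 — 5 statements merged into one kernel-verified Lean document; each statement's English description precedes it below -/
import Mathlib

section
/- Let κ₁ > 0 and κ₂ > 0, and let a ≥ 0, b ≥ 0 satisfy a + b < 1. Let x : [0,∞) → ℝ be a function that is bounded on the initial interval [0, κ₁ + κ₂] and satisfies the difference equation x(t) = a·x(t − κ₂) + b·x(t − κ₁ − κ₂) for all t ≥ κ₁ + κ₂. Then x converges to zero exponentially: there exist constants C ≥ 0 and μ > 0, with μ depending only on a, b, κ₁, κ₂, such that |x(t)| ≤ C·e^{−μ t}·sup_{s ∈ [0, κ₁+κ₂]} |x(s)| for all t ≥ 0. -/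
/-!
Put `T = κ₁ + κ₂` and choose `μ > 0` with `(a + b) e^{μT} ≤ 1`. The majorant
`B t = e^{μ(T - t)} sup_{[0,T]} |x|` is nonincreasing, dominates `|x|` on `[0, T]`, and satisfies
`(a + b) B (t - T) ≤ B t`. Since both delays lie in `[κ₂, T]`, the equation bounds `|x t|` by
`(a + b) B (t - T)` as soon as `|x| ≤ B` on `[0, t - κ₂]`, so induction in steps of `κ₂` gives
`|x| ≤ B` on `[0, ∞)`.
-/

open Real Set

theorem forall_nonneg_of_step_induction {P : ℝ → Prop} {δ : ℝ} (hδ : 0 < δ)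
    (h : ∀ s, 0 ≤ s → (∀ u, 0 ≤ u → u ≤ s - δ → P u) → P s) : ∀ s, 0 ≤ s → P s := by
  have below : ∀ n : ℕ, ∀ s, 0 ≤ s → s < n * δ → P s := by
    intro n
    induction n with
    | zero => intro s hs hsn; simp only [Nat.cast_zero, zero_mul] at hsn; linarith
    | succ n ih =>
      intro s hs hsn
      exact h s hs fun u hu hus => ih u hu (by push_cast at hsn; linarith)
  intro s hs
  obtain ⟨n, hn⟩ := exists_nat_gt (s / δ)
  exact below n s hs ((div_lt_iff₀ hδ).1 hn)

theorem exists_pos_mul_exp_mul_le_one {c T : ℝ} (hc : c < 1) (hT : 0 < T) :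
    ∃ μ, 0 < μ ∧ c * exp (μ * T) ≤ 1 := by
  set r := max c (1 / 2)
  have hr0 : 0 < r := lt_max_of_lt_right (by norm_num)
  have hr1 : r < 1 := max_lt hc (by norm_num)
  refine ⟨-log r / T, div_pos (neg_pos.2 (log_neg hr0 hr1)) hT, ?_⟩
  have hexp : exp (-log r / T * T) = r⁻¹ := by
    rw [div_mul_cancel₀ _ hT.ne', exp_neg, exp_log hr0]
  rw [hexp, ← div_eq_mul_inv, div_le_one hr0]
  exact le_max_left _ _

theorem abs_le_exp_decay_of_difference_eq {x : ℝ → ℝ} {κ₁ κ₂ a b μ M : ℝ}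
    (hκ₁ : 0 ≤ κ₁) (hκ₂ : 0 < κ₂) (ha : 0 ≤ a) (hb : 0 ≤ b) (hμ : 0 ≤ μ)
    (hμab : (a + b) * exp (μ * (κ₁ + κ₂)) ≤ 1)
    (hM : ∀ s ∈ Icc 0 (κ₁ + κ₂), |x s| ≤ M)
    (heq : ∀ t, κ₁ + κ₂ ≤ t → x t = a * x (t - κ₂) + b * x (t - κ₁ - κ₂)) :
    ∀ t, 0 ≤ t → |x t| ≤ exp (μ * (κ₁ + κ₂)) * exp (-μ * t) * M := by
  set T := κ₁ + κ₂
  set B : ℝ → ℝ := fun t => exp (μ * T) * exp (-μ * t) * M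
  have hM0 : 0 ≤ M := (abs_nonneg _).trans (hM 0 ⟨le_rfl, by positivity⟩)
  have hB_anti : Antitone B := fun u v huv => by
    have : exp (-μ * v) ≤ exp (-μ * u) := exp_le_exp.2 (by nlinarith)
    simp only [B]; gcongr
  have hB_shift : ∀ t, B (t - T) = exp (μ * T) * B t := fun t => by
    simp only [B]; rw [show -μ * (t - T) = -μ * t + μ * T by ring, exp_add]; ring
  refine forall_nonneg_of_step_induction hκ₂ fun s hs ih => ?_
  rcases lt_or_ge s T with hsT | hsT
  · have hB_ge : M ≤ B s := by
      have : 1 ≤ exp (μ * T) * exp (-μ * s) := by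
        rw [← exp_add, one_le_exp_iff]; nlinarith
      simp only [B]; nlinarith
    exact (hM s ⟨hs, hsT.le⟩).trans hB_ge
  · have h₁ : |x (s - κ₂)| ≤ B (s - T) :=
      (ih _ (by linarith) le_rfl).trans (hB_anti (by linarith))
    have h₂ : |x (s - T)| ≤ B (s - T) := ih _ (by linarith) (by linarith)
    rw [heq s hsT, sub_sub]
    calc |a * x (s - κ₂) + b * x (s - T)|
        ≤ a * |x (s - κ₂)| + b * |x (s - T)| := by
          simpa only [abs_mul, abs_of_nonneg ha, abs_of_nonneg hb] using
            abs_add_le (a * x (s - κ₂)) (b * x (s - T))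
      _ ≤ (a + b) * B (s - T) := by rw [add_mul]; gcongr
      _ = (a + b) * exp (μ * T) * B s := by rw [hB_shift]; ring
      _ ≤ B s := by
          have : 0 ≤ B s := by positivity
          nlinarith

/-- Exponential stability of the scalar difference equation
`x(t) = a x(t − κ₂) + b x(t − κ₁ − κ₂)` with nonnegative coefficients satisfying `a + b < 1`:
there are constants `C ≥ 0` and `μ > 0` (depending only on `a, b, κ₁, κ₂`) such that every
solution bounded on the initial interval `[0, κ₁ + κ₂]` satisfies
`|x(t)| ≤ C e^{−μ t} sup_{s ∈ [0,κ₁+κ₂]} |x(s)|` for all `t ≥ 0`. -/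
theorem difference_equation_exponential_decay (κ₁ κ₂ a b : ℝ)
    (hκ₁ : 0 < κ₁) (hκ₂ : 0 < κ₂) (ha : 0 ≤ a) (hb : 0 ≤ b) (hab : a + b < 1) :
    ∃ C : ℝ, 0 ≤ C ∧ ∃ μ : ℝ, 0 < μ ∧
      ∀ x : ℝ → ℝ,
        BddAbove ((fun s => |x s|) '' Set.Icc 0 (κ₁ + κ₂)) →
        (∀ t : ℝ, κ₁ + κ₂ ≤ t → x t = a * x (t - κ₂) + b * x (t - κ₁ - κ₂)) →
        ∀ t : ℝ, 0 ≤ t →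
          |x t| ≤ C * Real.exp (-μ * t) *
            sSup ((fun s => |x s|) '' Set.Icc 0 (κ₁ + κ₂)) := by
  obtain ⟨μ, hμ, hμab⟩ := exists_pos_mul_exp_mul_le_one hab (add_pos hκ₁ hκ₂)
  refine ⟨exp (μ * (κ₁ + κ₂)), (exp_pos _).le, μ, hμ, fun x hbdd heq => ?_⟩
  exact abs_le_exp_decay_of_difference_eq hκ₁.le hκ₂ ha hb hμ.le hμab
    (fun s hs => le_csSup hbdd (mem_image_of_mem _ hs)) heq
end

section
/- Let L > 0, transport speeds v₁⋆, v₂⋆, λ₁, λ₂ > 0, constants 0 < r₂ ≤ r₁ < 1, τ₁, τ₂ > 0, and set E_i = exp(−L/(τ_i v_i⋆)) and κ_i = L/v_i⋆ + L/λ_i for i = 1,2. Suppose α₁, β₁ : [0,L] × [0,∞) → ℝ and α₂, β₂ : [−L,0] × [0,∞) → ℝ are continuously differentiable and satisfy the target system: ∂_t α_i + v_i⋆ ∂_x α_i = 0 and ∂_t β_i − λ_i ∂_x β_i = 0 (i = 1,2), with boundary conditions β₁(L,t) = r₁ E₁ α₁(L,t), α₁(0,t) = α₂(0,t), α₂(−L,t)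 = (E₂/r₂) β₂(−L,t), and β₂(0,t) = (r₂/r₁) β₁(0,t) + ((r₁−r₂)/(1−r₁)) α₂(0,t). Then for all t ≥ κ₁ + κ₂, the boundary trace satisfies the difference equation β₂(0,t) = E₂·((r₁−r₂)/((1−r₁) r₂))·β₂(0, t−κ₂) + E₁ E₂·β₂(0, t−κ₁−κ₂). -/
/-!
Along a characteristic `s ↦ (p + c s, t₀ + s)` the transport equation `∂ₜu + c ∂ₓu = 0` says
exactly that `u` has zero derivative, so by the mean value theorem `u` is constant on it.
Following `α` rightward and `β` leftward across a road thus turns a reflection at one end into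
a delayed reflection at the other: `β₁(0,t) = r₁E₁ α₁(0,t−κ₁)` and
`α₂(0,t) = (E₂/r₂) β₂(0,t−κ₂)`. Substituting these and `α₁(0,·) = α₂(0,·)` into the junction
condition for `β₂(0,t)` gives the difference equation.
-/

open Set

lemma hasDerivAt_along_line {u : ℝ → ℝ → ℝ} {p t₀ c s : ℝ}
    (hu : DifferentiableAt ℝ (fun z : ℝ × ℝ => u z.1 z.2) (p + c * s, t₀ + s)) :
    HasDerivAt (fun σ => u (p + c * σ) (t₀ + σ))
      (deriv (fun τ => u (p + c * s) τ) (t₀ + s) + c * deriv (fun y => u y (t₀ + s)) (p + c * s))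
      s := by
  set D := fderiv ℝ (fun z : ℝ × ℝ => u z.1 z.2) (p + c * s, t₀ + s)
  have hD := hu.hasFDerivAt
  have ht : HasDerivAt (fun τ => u (p + c * s) τ) (D (0, 1)) (t₀ + s) :=
    hD.comp_hasDerivAt (f := fun τ => (p + c * s, τ)) _
      ((hasDerivAt_const _ _).prodMk (hasDerivAt_id _))
  have hx : HasDerivAt (fun y => u y (t₀ + s)) (D (1, 0)) (p + c * s) :=
    hD.comp_hasDerivAt (f := fun y => (y, t₀ + s)) _
      ((hasDerivAt_id _).prodMk (hasDerivAt_const _ _))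
  have hline : HasDerivAt (fun σ : ℝ => (p + c * σ, t₀ + σ)) (c, 1) s :=
    (((hasDerivAt_id s).const_mul c).const_add p |>.congr_deriv (mul_one c)).prodMk
      ((hasDerivAt_id s).const_add t₀)
  have hdir : D (c, 1) = D (0, 1) + c * D (1, 0) := by
    rw [show ((c, 1) : ℝ × ℝ) = (0, 1) + c • (1, 0) by simp, map_add, map_smul, smul_eq_mul]
  rw [ht.deriv, hx.deriv, ← hdir]
  exact hD.comp_hasDerivAt s hline

lemma eq_of_transport_along_line {u : ℝ → ℝ → ℝ} {p t₀ c T : ℝ} (hT : 0 < T)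
    (hcont : ContinuousOn (fun s => u (p + c * s) (t₀ + s)) (Icc 0 T))
    (hdiff : ∀ s ∈ Ioo 0 T, DifferentiableAt ℝ (fun z : ℝ × ℝ => u z.1 z.2) (p + c * s, t₀ + s))
    (hpde : ∀ s ∈ Ioo 0 T, deriv (fun τ => u (p + c * s) τ) (t₀ + s)
      + c * deriv (fun y => u y (t₀ + s)) (p + c * s) = 0) :
    u (p + c * T) (t₀ + T) = u p t₀ := by
  obtain ⟨s, hs, hslope⟩ := exists_hasDerivAt_eq_slope (fun σ => u (p + c * σ) (t₀ + σ)) _ hT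
    hcont (fun s hs => hasDerivAt_along_line (hdiff s hs))
  rw [hpde s hs, eq_comm, div_eq_zero_iff, sub_eq_zero] at hslope
  simpa using hslope.resolve_right (sub_ne_zero.2 hT.ne')

lemma eq_of_transport_on_strip {u : ℝ → ℝ → ℝ} {a b c : ℝ}
    (hu : ContDiffOn ℝ 1 (fun z : ℝ × ℝ => u z.1 z.2) (Icc a b ×ˢ Ici 0))
    (hpde : ∀ x ∈ Icc a b, ∀ t ∈ Ici (0 : ℝ),
      deriv (fun s => u x s) t + c * deriv (fun y => u y t) x = 0)
    {p t₀ T : ℝ} (hT : 0 < T) (ht₀ : 0 ≤ t₀)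
    (hseg : ∀ s ∈ Icc 0 T, p + c * s ∈ Icc a b) (hint : ∀ s ∈ Ioo 0 T, p + c * s ∈ Ioo a b) :
    u (p + c * T) (t₀ + T) = u p t₀ := by
  refine eq_of_transport_along_line hT ?_ (fun s hs => ?_) (fun s hs => ?_)
  · exact hu.continuousOn.comp (f := fun s => (p + c * s, t₀ + s)) (by fun_prop)
      fun s hs => ⟨hseg s hs, add_nonneg ht₀ hs.1⟩
  · refine (hu.differentiableOn one_ne_zero).differentiableAt (mem_interior_iff_mem_nhds.mp ?_)
    rw [interior_prod_eq, interior_Icc, interior_Ici]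
    exact ⟨hint s hs, add_pos_of_nonneg_of_pos ht₀ hs.1⟩
  · exact hpde _ (Ioo_subset_Icc_self (hint s hs)) _ (add_nonneg ht₀ hs.1.le)

lemma transport_rightward {u : ℝ → ℝ → ℝ} {a b v : ℝ} (hab : a < b) (hv : 0 < v)
    (hu : ContDiffOn ℝ 1 (fun z : ℝ × ℝ => u z.1 z.2) (Icc a b ×ˢ Ici 0))
    (hpde : ∀ x ∈ Icc a b, ∀ t ∈ Ici (0 : ℝ),
      deriv (fun s => u x s) t + v * deriv (fun y => u y t) x = 0)
    {t : ℝ} (ht : (b - a) / v ≤ t) :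
    u b t = u a (t - (b - a) / v) := by
  have hT : v * ((b - a) / v) = b - a := mul_div_cancel₀ _ hv.ne'
  have key := eq_of_transport_on_strip hu hpde (p := a) (div_pos (sub_pos.2 hab) hv)
    (sub_nonneg.2 ht) (fun s hs => ⟨?_, ?_⟩) (fun s hs => ⟨?_, ?_⟩)
  · rwa [hT, sub_add_cancel, add_sub_cancel] at key
  all_goals nlinarith [hs.1, hs.2]

lemma transport_leftward {u : ℝ → ℝ → ℝ} {a b lam : ℝ} (hab : a < b) (hlam : 0 < lam)
    (hu : ContDiffOn ℝ 1 (fun z : ℝ × ℝ => u z.1 z.2) (Icc a b ×ˢ Ici 0))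
    (hpde : ∀ x ∈ Icc a b, ∀ t ∈ Ici (0 : ℝ),
      deriv (fun s => u x s) t - lam * deriv (fun y => u y t) x = 0)
    {t : ℝ} (ht : (b - a) / lam ≤ t) :
    u a t = u b (t - (b - a) / lam) := by
  have hT : -lam * ((b - a) / lam) = a - b := by field_simp; ring
  have hpde' : ∀ x ∈ Icc a b, ∀ t ∈ Ici (0 : ℝ),
      deriv (fun s => u x s) t + -lam * deriv (fun y => u y t) x = 0 := by
    simpa only [neg_mul, ← sub_eq_add_neg] using hpde
  have key := eq_of_transport_on_strip hu hpde' (p := b) (div_pos (sub_pos.2 hab) hlam)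
    (sub_nonneg.2 ht) (fun s hs => ⟨?_, ?_⟩) (fun s hs => ⟨?_, ?_⟩)
  · rwa [hT, add_sub_cancel, sub_add_cancel] at key
  all_goals nlinarith [hs.1, hs.2]

section RoundTrip

variable {u w : ℝ → ℝ → ℝ} {a b v lam k : ℝ} (hab : a < b) (hv : 0 < v) (hlam : 0 < lam)
  (hu : ContDiffOn ℝ 1 (fun z : ℝ × ℝ => u z.1 z.2) (Icc a b ×ˢ Ici 0))
  (hw : ContDiffOn ℝ 1 (fun z : ℝ × ℝ => w z.1 z.2) (Icc a b ×ˢ Ici 0))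
  (hpde_u : ∀ x ∈ Icc a b, ∀ t ∈ Ici (0 : ℝ),
    deriv (fun s => u x s) t + v * deriv (fun y => u y t) x = 0)
  (hpde_w : ∀ x ∈ Icc a b, ∀ t ∈ Ici (0 : ℝ),
    deriv (fun s => w x s) t - lam * deriv (fun y => w y t) x = 0)
include hab hv hlam hu hw hpde_u hpde_w

lemma leftward_trace_eq_of_reflection_right (hbc : ∀ t ∈ Ici (0 : ℝ), w b t = k * u b t)
    {t : ℝ} (ht : (b - a) / v + (b - a) / lam ≤ t) :
    w a t = k * u a (t - ((b - a) / v + (b - a) / lam)) := by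
  have hv' : 0 ≤ (b - a) / v := div_nonneg (sub_pos.2 hab).le hv.le
  have hlam' : 0 ≤ (b - a) / lam := div_nonneg (sub_pos.2 hab).le hlam.le
  rw [transport_leftward hab hlam hw hpde_w (by linarith),
    hbc (t - (b - a) / lam) (by rw [mem_Ici]; linarith),
    transport_rightward hab hv hu hpde_u (t := t - (b - a) / lam) (by linarith), sub_sub,
    add_comm ((b - a) / lam)]

lemma rightward_trace_eq_of_reflection_left (hbc : ∀ t ∈ Ici (0 : ℝ), u a t = k * w a t)
    {t : ℝ} (ht : (b - a) / v + (b - a) / lam ≤ t) :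
    u b t = k * w b (t - ((b - a) / v + (b - a) / lam)) := by
  have hv' : 0 ≤ (b - a) / v := div_nonneg (sub_pos.2 hab).le hv.le
  have hlam' : 0 ≤ (b - a) / lam := div_nonneg (sub_pos.2 hab).le hlam.le
  rw [transport_rightward hab hv hu hpde_u (by linarith),
    hbc (t - (b - a) / v) (by rw [mem_Ici]; linarith),
    transport_leftward hab hlam hw hpde_w (t := t - (b - a) / v) (by linarith), sub_sub]

end RoundTrip

theorem target_system_trace_difference_equation_general
    (L v₁ v₂ lam₁ lam₂ r₁ r₂ : ℝ)
    (hL : 0 < L) (hv₁ : 0 < v₁) (hv₂ : 0 < v₂) (hlam₁ : 0 < lam₁) (hlam₂ : 0 < lam₂)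
    (hr₂ : 0 < r₂) (hr₂₁ : r₂ ≤ r₁) (hr₁ : r₁ < 1)
    (E₁ E₂ κ₁ κ₂ : ℝ)
    (hκ₁ : κ₁ = L / v₁ + L / lam₁) (hκ₂ : κ₂ = L / v₂ + L / lam₂)
    (α₁ β₁ α₂ β₂ : ℝ → ℝ → ℝ)
    (hα₁C1 : ContDiffOn ℝ 1 (fun z : ℝ × ℝ => α₁ z.1 z.2) (Set.Icc 0 L ×ˢ Set.Ici 0))
    (hβ₁C1 : ContDiffOn ℝ 1 (fun z : ℝ × ℝ => β₁ z.1 z.2) (Set.Icc 0 L ×ˢ Set.Ici 0))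
    (hα₂C1 : ContDiffOn ℝ 1 (fun z : ℝ × ℝ => α₂ z.1 z.2) (Set.Icc (-L) 0 ×ˢ Set.Ici 0))
    (hβ₂C1 : ContDiffOn ℝ 1 (fun z : ℝ × ℝ => β₂ z.1 z.2) (Set.Icc (-L) 0 ×ˢ Set.Ici 0))
    (hpdeα₁ : ∀ x ∈ Set.Icc (0 : ℝ) L, ∀ t ∈ Set.Ici (0 : ℝ),
      deriv (fun s => α₁ x s) t + v₁ * deriv (fun y => α₁ y t) x = 0)
    (hpdeβ₁ : ∀ x ∈ Set.Icc (0 : ℝ) L, ∀ t ∈ Set.Ici (0 : ℝ),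
      deriv (fun s => β₁ x s) t - lam₁ * deriv (fun y => β₁ y t) x = 0)
    (hpdeα₂ : ∀ x ∈ Set.Icc (-L) (0 : ℝ), ∀ t ∈ Set.Ici (0 : ℝ),
      deriv (fun s => α₂ x s) t + v₂ * deriv (fun y => α₂ y t) x = 0)
    (hpdeβ₂ : ∀ x ∈ Set.Icc (-L) (0 : ℝ), ∀ t ∈ Set.Ici (0 : ℝ),
      deriv (fun s => β₂ x s) t - lam₂ * deriv (fun y => β₂ y t) x = 0)
    (hbc₁ : ∀ t ∈ Set.Ici (0 : ℝ), β₁ L t = r₁ * E₁ * α₁ L t)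
    (hbc₂ : ∀ t ∈ Set.Ici (0 : ℝ), α₁ 0 t = α₂ 0 t)
    (hbc₃ : ∀ t ∈ Set.Ici (0 : ℝ), α₂ (-L) t = E₂ / r₂ * β₂ (-L) t)
    (hbc₄ : ∀ t ∈ Set.Ici (0 : ℝ),
      β₂ 0 t = r₂ / r₁ * β₁ 0 t + (r₁ - r₂) / (1 - r₁) * α₂ 0 t) :
    ∀ t : ℝ, κ₁ + κ₂ ≤ t →
      β₂ 0 t = E₂ * ((r₁ - r₂) / ((1 - r₁) * r₂)) * β₂ 0 (t - κ₂)
        + E₁ * E₂ * β₂ 0 (t - κ₁ - κ₂) := by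
  intro t ht
  have hκ₁_nonneg : 0 ≤ κ₁ := by rw [hκ₁]; positivity
  have hκ₂_nonneg : 0 ≤ κ₂ := by rw [hκ₂]; positivity
  have road₁ : ∀ s, κ₁ ≤ s → β₁ 0 s = r₁ * E₁ * α₁ 0 (s - κ₁) := fun s hs => by
    rw [hκ₁] at hs ⊢
    simpa only [sub_zero] using leftward_trace_eq_of_reflection_right hL hv₁ hlam₁ hα₁C1 hβ₁C1
      hpdeα₁ hpdeβ₁ hbc₁ (t := s) (by simpa only [sub_zero] using hs)
  have road₂ : ∀ s, κ₂ ≤ s → α₂ 0 s = E₂ / r₂ * β₂ 0 (s - κ₂) := fun s hs => by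
    rw [hκ₂] at hs ⊢
    simpa only [sub_neg_eq_add, zero_add] using rightward_trace_eq_of_reflection_left
      (neg_lt_zero.2 hL) hv₂ hlam₂ hα₂C1 hβ₂C1 hpdeα₂ hpdeβ₂ hbc₃ (t := s)
      (by simpa only [sub_neg_eq_add, zero_add] using hs)
  rw [hbc₄ t (by rw [mem_Ici]; linarith), road₁ t (by linarith),
    hbc₂ (t - κ₁) (by rw [mem_Ici]; linarith), road₂ t (by linarith),
    road₂ (t - κ₁) (by linarith)]
  have hr₁_ne : r₁ ≠ 0 := (hr₂.trans_le hr₂₁).ne'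
  have h1r₁ : 1 - r₁ ≠ 0 := (sub_pos.2 hr₁).ne'
  field_simp
  ring

/-- For the decoupled target system of transport equations on the two-road network
(`α_i` travelling rightward with speed `v_i⋆`, `β_i` travelling leftward with speed `λ_i`,
segment 1 on `[0,L]`, segment 2 on `[−L,0]`, with the boundary reflections of the paper),
the junction trace `β₂(0,·)` satisfies, for `t ≥ κ₁ + κ₂`, the difference equation
`β₂(0,t) = E₂ (r₁−r₂)/((1−r₁)r₂) β₂(0,t−κ₂) + E₁E₂ β₂(0,t−κ₁−κ₂)`. -/
theorem target_system_trace_difference_equation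
    (L v₁ v₂ lam₁ lam₂ r₁ r₂ τ₁ τ₂ : ℝ)
    (hL : 0 < L) (hv₁ : 0 < v₁) (hv₂ : 0 < v₂) (hlam₁ : 0 < lam₁) (hlam₂ : 0 < lam₂)
    (hr₂ : 0 < r₂) (hr₂₁ : r₂ ≤ r₁) (hr₁ : r₁ < 1) (hτ₁ : 0 < τ₁) (hτ₂ : 0 < τ₂)
    (E₁ E₂ κ₁ κ₂ : ℝ)
    (hE₁ : E₁ = Real.exp (-L / (τ₁ * v₁))) (hE₂ : E₂ = Real.exp (-L / (τ₂ * v₂)))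
    (hκ₁ : κ₁ = L / v₁ + L / lam₁) (hκ₂ : κ₂ = L / v₂ + L / lam₂)
    (α₁ β₁ α₂ β₂ : ℝ → ℝ → ℝ)
    (hα₁C1 : ContDiffOn ℝ 1 (fun z : ℝ × ℝ => α₁ z.1 z.2) (Set.Icc 0 L ×ˢ Set.Ici 0))
    (hβ₁C1 : ContDiffOn ℝ 1 (fun z : ℝ × ℝ => β₁ z.1 z.2) (Set.Icc 0 L ×ˢ Set.Ici 0))
    (hα₂C1 : ContDiffOn ℝ 1 (fun z : ℝ × ℝ => α₂ z.1 z.2) (Set.Icc (-L) 0 ×ˢ Set.Ici 0))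
    (hβ₂C1 : ContDiffOn ℝ 1 (fun z : ℝ × ℝ => β₂ z.1 z.2) (Set.Icc (-L) 0 ×ˢ Set.Ici 0))
    (hpdeα₁ : ∀ x ∈ Set.Icc (0 : ℝ) L, ∀ t ∈ Set.Ici (0 : ℝ),
      deriv (fun s => α₁ x s) t + v₁ * deriv (fun y => α₁ y t) x = 0)
    (hpdeβ₁ : ∀ x ∈ Set.Icc (0 : ℝ) L, ∀ t ∈ Set.Ici (0 : ℝ),
      deriv (fun s => β₁ x s) t - lam₁ * deriv (fun y => β₁ y t) x = 0)
    (hpdeα₂ : ∀ x ∈ Set.Icc (-L) (0 : ℝ), ∀ t ∈ Set.Ici (0 : ℝ),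
      deriv (fun s => α₂ x s) t + v₂ * deriv (fun y => α₂ y t) x = 0)
    (hpdeβ₂ : ∀ x ∈ Set.Icc (-L) (0 : ℝ), ∀ t ∈ Set.Ici (0 : ℝ),
      deriv (fun s => β₂ x s) t - lam₂ * deriv (fun y => β₂ y t) x = 0)
    (hbc₁ : ∀ t ∈ Set.Ici (0 : ℝ), β₁ L t = r₁ * E₁ * α₁ L t)
    (hbc₂ : ∀ t ∈ Set.Ici (0 : ℝ), α₁ 0 t = α₂ 0 t)
    (hbc₃ : ∀ t ∈ Set.Ici (0 : ℝ), α₂ (-L) t = E₂ / r₂ * β₂ (-L) t)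
    (hbc₄ : ∀ t ∈ Set.Ici (0 : ℝ),
      β₂ 0 t = r₂ / r₁ * β₁ 0 t + (r₁ - r₂) / (1 - r₁) * α₂ 0 t) :
    ∀ t : ℝ, κ₁ + κ₂ ≤ t →
      β₂ 0 t = E₂ * ((r₁ - r₂) / ((1 - r₁) * r₂)) * β₂ 0 (t - κ₂)
        + E₁ * E₂ * β₂ 0 (t - κ₁ - κ₂) :=
  target_system_trace_difference_equation_general L v₁ v₂ lam₁ lam₂ r₁ r₂ hL hv₁ hv₂ hlam₁ hlam₂ hr₂
    hr₂₁ hr₁ E₁ E₂ κ₁ κ₂ hκ₁ hκ₂ α₁ β₁ α₂ β₂ hα₁C1 hβ₁C1 hα₂C1 hβ₂C1 hpdeα₁ hpdeβ₁ hpdeα₂ hpdeβ₂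
    hbc₁ hbc₂ hbc₃ hbc₄
end

section
/- Let L > 0, v⋆ > 0, λ > 0, γ p⋆ with λ = γ p⋆ − v⋆ > 0, τ > 0, and let c(ξ) = −(1/τ)·exp(−ξ/(τ v⋆)). Consider the kernel system on the triangle T₁ = {(x,ξ) ∈ [0,L]² : ξ ≥ x}: λ ∂_x K^{vw}(x,ξ) − v⋆ ∂_ξ K^{vw}(x,ξ) = c(ξ) K^{vv}(x,ξ), ∂_x K^{vv}(x,ξ) + ∂_ξ K^{vv}(x,ξ) = 0, with boundary conditions K^{vw}(x,x) = c(x)/(γ p⋆) and K^{vv}(x,L) = −exp(L/(τ v⋆)) K^{vw}(x,L). Then this Goursat-type system admits a unique bounded solution pair (K^{vw}, K^{vv}) that is continuously differentiable on T₁. -/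
/-- The triangular domain `T₁ = {(x,ξ) ∈ [0,L]² : ξ ≥ x}`. -/
def upperTriangle (L : ℝ) : Set (ℝ × ℝ) :=
  {z : ℝ × ℝ | 0 ≤ z.1 ∧ z.1 ≤ z.2 ∧ z.2 ≤ L}

/-- `(Kvw, Kvv)` is a bounded, continuously differentiable solution of the Goursat kernel
system on `T₁`: `λ ∂_x K^{vw} − v⋆ ∂_ξ K^{vw} = c(ξ) K^{vv}`, `∂_x K^{vv} + ∂_ξ K^{vv} = 0`,
with `K^{vw}(x,x) = c(x)/(γ p⋆)` and `K^{vv}(x,L) = −exp(L/(τ v⋆)) K^{vw}(x,L)`. -/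
def IsKernelSolOutgoing (L vs lam γp τ : ℝ) (c : ℝ → ℝ) (Kvw Kvv : ℝ → ℝ → ℝ) : Prop :=
  ContDiffOn ℝ 1 (fun z : ℝ × ℝ => Kvw z.1 z.2) (upperTriangle L) ∧
  ContDiffOn ℝ 1 (fun z : ℝ × ℝ => Kvv z.1 z.2) (upperTriangle L) ∧
  (∃ M : ℝ, ∀ z ∈ upperTriangle L, |Kvw z.1 z.2| ≤ M ∧ |Kvv z.1 z.2| ≤ M) ∧
  (∀ x ξ : ℝ, (x, ξ) ∈ upperTriangle L →
    lam * deriv (fun y => Kvw y ξ) x - vs * deriv (fun z => Kvw x z) ξ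
      = c ξ * Kvv x ξ) ∧
  (∀ x ξ : ℝ, (x, ξ) ∈ upperTriangle L →
    deriv (fun y => Kvv y ξ) x + deriv (fun z => Kvv x z) ξ = 0) ∧
  (∀ x ∈ Set.Icc (0 : ℝ) L, Kvw x x = c x / γp) ∧
  (∀ x ∈ Set.Icc (0 : ℝ) L, Kvv x L = -Real.exp (L / (τ * vs)) * Kvw x L)

/-!
The explicit pair `K^{vw}(x, ξ) = c(ξ) / (γ p⋆)`, `K^{vv} ≡ 1 / (τ γ p⋆)` solves the system.
For uniqueness, integrate along the characteristics: `K^{vv}` is constant along `(1, 1)` up to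
`ξ = L`, where the boundary condition expresses it through `K^{vw}(·, L)`, and `K^{vw}`
integrates along `(λ, -v⋆)` back to the diagonal, where it is prescribed. For two solutions,
the difference `g` of the traces `K^{vw}(·, L)` therefore satisfies `|g x| ≤ K ∫_x^L |g|`, so
`g = 0` by a backward Grönwall argument, and the two representations then agree on all of `T₁`.
-/

open Set Filter Topology intervalIntegral
open MeasureTheory (volume)

theorem hasDerivAt_comp_affine {F : ℝ → ℝ → ℝ} {x ξ a b t : ℝ}
    (hF : DifferentiableAt ℝ (fun z : ℝ × ℝ => F z.1 z.2) (x + a * t, ξ + b * t)) :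
    HasDerivAt (fun s => F (x + a * s) (ξ + b * s))
      (a * deriv (fun y => F y (ξ + b * t)) (x + a * t)
        + b * deriv (fun z => F (x + a * t) z) (ξ + b * t)) t := by
  set D := fderiv ℝ (fun z : ℝ × ℝ => F z.1 z.2) (x + a * t, ξ + b * t)
  have hD := hF.hasFDerivAt
  have hx : deriv (fun y => F y (ξ + b * t)) (x + a * t) = D (1, 0) := by
    have h := hD.comp_hasDerivAt (x + a * t)
      ((hasDerivAt_id (x + a * t)).prodMk (hasDerivAt_const (x + a * t) (ξ + b * t)))
    exact h.deriv
  have hξ : deriv (fun z => F (x + a * t) z) (ξ + b * t) = D (0, 1) := by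
    have h := hD.comp_hasDerivAt (ξ + b * t)
      ((hasDerivAt_const (ξ + b * t) (x + a * t)).prodMk (hasDerivAt_id (ξ + b * t)))
    exact h.deriv
  have hline : HasDerivAt (fun s : ℝ => (x + a * s, ξ + b * s)) (a, b) t :=
    (((hasDerivAt_id t).const_mul a).const_add x |>.prodMk
      (((hasDerivAt_id t).const_mul b).const_add ξ)).congr_deriv (by simp)
  have hab : D (a, b) = a * D (1, 0) + b * D (0, 1) := by
    rw [show ((a, b) : ℝ × ℝ) = a • (1, 0) + b • (0, 1) by simp, map_add, map_smul, map_smul]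
    rfl
  rw [hx, hξ, ← hab]
  exact hD.comp_hasDerivAt t hline

theorem integral_eq_sub_of_directionalDeriv_eq {F : ℝ → ℝ → ℝ} {S : Set (ℝ × ℝ)}
    {x ξ a b T : ℝ} {f : ℝ → ℝ} (hF : ContDiffOn ℝ 1 (fun z : ℝ × ℝ => F z.1 z.2) S)
    (hT : 0 ≤ T) (hmem : ∀ t ∈ Icc 0 T, (x + a * t, ξ + b * t) ∈ S)
    (hnhds : ∀ t ∈ Ioo 0 T, S ∈ 𝓝 (x + a * t, ξ + b * t))
    (hderiv : ∀ t ∈ Ioo 0 T, a * deriv (fun y => F y (ξ + b * t)) (x + a * t)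
      + b * deriv (fun z => F (x + a * t) z) (ξ + b * t) = f t)
    (hf : IntervalIntegrable f volume 0 T) :
    ∫ t in 0..T, f t = F (x + a * T) (ξ + b * T) - F x ξ := by
  have hcont : ContinuousOn (fun t => F (x + a * t) (ξ + b * t)) (Icc 0 T) :=
    hF.continuousOn.comp (by fun_prop) hmem
  have hdiff (t : ℝ) (ht : t ∈ Ioo 0 T) :
      HasDerivWithinAt (fun t => F (x + a * t) (ξ + b * t)) (f t) (Ioi t) t := by
    rw [← hderiv t ht]
    exact (hasDerivAt_comp_affine
      ((hF.contDiffAt (hnhds t ht)).differentiableAt one_ne_zero)).hasDerivWithinAt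
  simpa using integral_eq_sub_of_hasDeriv_right_of_le hT hcont hdiff hf

theorem eq_zero_of_le_mul_integral {u : ℝ → ℝ} {a b K : ℝ} (hu : ContinuousOn u (Icc a b))
    (hu₀ : ∀ x ∈ Icc a b, 0 ≤ u x) (h : ∀ x ∈ Icc a b, u x ≤ K * ∫ s in x..b, u s) :
    ∀ x ∈ Icc a b, u x = 0 := by
  intro x hx
  have hab : a ≤ b := hx.1.trans hx.2
  set G : ℝ → ℝ := fun y => ∫ s in y..b, u s
  have hG_nonneg (y : ℝ) (hy : y ∈ Icc a b) : 0 ≤ G y :=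
    integral_nonneg hy.2 fun s hs => hu₀ s ⟨hy.1.trans hs.1, hs.2⟩
  have hG_cont : ContinuousOn G (Icc a b) := by
    have := continuousOn_primitive_interval_left (μ := volume)
      (uIcc_of_le hab ▸ hu : ContinuousOn u (uIcc a b)).integrableOn_uIcc
    rwa [uIcc_of_le hab] at this
  have hG_deriv (y : ℝ) (hy : y ∈ Ioo a b) : HasDerivAt G (-u y) y :=
    integral_hasDerivAt_left
      ((hu.mono (Icc_subset_Icc hy.1.le le_rfl)).intervalIntegrable_of_Icc hy.2.le)
      (hu.mono Ioo_subset_Icc_self |>.stronglyMeasurableAtFilter isOpen_Ioo y hy)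
      (hu.continuousAt (Icc_mem_nhds hy.1 hy.2))
  -- `exp (K y) * G y` is nondecreasing and vanishes at `b`.
  have hmono : MonotoneOn (fun y => Real.exp (K * y) * G y) (Icc a b) := by
    have hF (y : ℝ) (hy : y ∈ Ioo a b) :
        HasDerivAt (fun y => Real.exp (K * y) * G y)
          (Real.exp (K * y) * (K * G y - u y)) y := by
      have hexp : HasDerivAt (fun y => Real.exp (K * y)) (Real.exp (K * y) * K) y := by
        simpa using ((hasDerivAt_id y).const_mul K).exp
      exact (hexp.mul (hG_deriv y hy)).congr_deriv (by ring)
    refine monotoneOn_of_deriv_nonneg (convex_Icc a b) (by fun_prop) ?_ ?_ <;>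
      rw [interior_Icc]
    · exact fun y hy => (hF y hy).differentiableAt.differentiableWithinAt
    · intro y hy
      rw [(hF y hy).deriv]
      exact mul_nonneg (Real.exp_pos _).le (sub_nonneg.2 (h y (Ioo_subset_Icc_self hy)))
  have hGx : G x = 0 := by
    have := hmono hx (right_mem_Icc.2 hab) hx.2
    simp only [G, integral_same, mul_zero] at this
    exact le_antisymm (nonpos_of_mul_nonpos_right this (Real.exp_pos _)) (hG_nonneg x hx)
  have hux : u x ≤ K * G x := h x hx
  rw [hGx, mul_zero] at hux
  exact le_antisymm hux (hu₀ x hx)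

section Triangle

variable {L lam vs x ξ t : ℝ}

theorem upperTriangle_mem_nhds (h₀ : 0 < x) (hxξ : x < ξ) (hξ : ξ < L) :
    upperTriangle L ∈ 𝓝 (x, ξ) := by
  have hopen : IsOpen {z : ℝ × ℝ | 0 < z.1 ∧ z.1 < z.2 ∧ z.2 < L} :=
    (isOpen_lt continuous_const continuous_fst).inter
      ((isOpen_lt continuous_fst continuous_snd).inter (isOpen_lt continuous_snd continuous_const))
  exact mem_of_superset (hopen.mem_nhds ⟨h₀, hxξ, hξ⟩)
    fun z hz => ⟨hz.1.le, hz.2.1.le, hz.2.2.le⟩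

theorem isCompact_upperTriangle : IsCompact (upperTriangle L) := by
  have hclosed : IsClosed (upperTriangle L) :=
    (isClosed_le continuous_const continuous_fst).inter
      ((isClosed_le continuous_fst continuous_snd).inter
        (isClosed_le continuous_snd continuous_const))
  exact (isCompact_Icc.prod isCompact_Icc).of_isClosed_subset hclosed
    fun z hz => ⟨⟨hz.1, hz.2.1.trans hz.2.2⟩, ⟨hz.1.trans hz.2.1, hz.2.2⟩⟩

theorem exists_bound_of_continuousOn_upperTriangle {f g : ℝ × ℝ → ℝ}
    (hf : ContinuousOn f (upperTriangle L)) (hg : ContinuousOn g (upperTriangle L)) :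
    ∃ M : ℝ, ∀ z ∈ upperTriangle L, |f z| ≤ M ∧ |g z| ≤ M := by
  obtain ⟨Mf, hMf⟩ := isCompact_upperTriangle.exists_bound_of_continuousOn hf
  obtain ⟨Mg, hMg⟩ := isCompact_upperTriangle.exists_bound_of_continuousOn hg
  exact ⟨max Mf Mg, fun z hz => ⟨le_max_of_le_left (hMf z hz), le_max_of_le_right (hMg z hz)⟩⟩

/-- Every point of the triangle is a limit of points on the open segment towards the
vertex `(0, L)`, all of which lie off the diagonal. -/
theorem upperTriangle_subset_closure_offDiag (hL : 0 < L) :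
    upperTriangle L ⊆ closure (upperTriangle L ∩ {z | z.1 < z.2}) := by
  intro z hz
  refine closure_mono ?_ (segment_subset_closure_openSegment (left_mem_segment ℝ z (0, L)))
  rw [openSegment_eq_image]
  rintro _ ⟨θ, ⟨hθ₀, hθ₁⟩, rfl⟩
  obtain ⟨h₀, h₁, h₂⟩ := hz
  simp only [upperTriangle, mem_inter_iff, mem_ofPred_eq, Prod.fst_add, Prod.snd_add,
    Prod.smul_fst, Prod.smul_snd, smul_eq_mul, mul_zero, add_zero]
  refine ⟨⟨by nlinarith, by nlinarith, by nlinarith⟩, by nlinarith⟩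

theorem characteristic_mem_upperTriangle (hlam : 0 < lam) (hvs : 0 < vs)
    (hz : (x, ξ) ∈ upperTriangle L) (ht : t ∈ Icc 0 ((ξ - x) / (lam + vs))) :
    (x + lam * t, ξ + -vs * t) ∈ upperTriangle L := by
  obtain ⟨hx, -, hξ⟩ := hz
  have hT := (le_div_iff₀ (add_pos hlam hvs)).1 ht.2
  exact ⟨by nlinarith [ht.1], by nlinarith, by nlinarith [ht.1]⟩

theorem upperTriangle_mem_nhds_characteristic (hlam : 0 < lam) (hvs : 0 < vs)
    (hz : (x, ξ) ∈ upperTriangle L) (ht : t ∈ Ioo 0 ((ξ - x) / (lam + vs))) :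
    upperTriangle L ∈ 𝓝 (x + lam * t, ξ + -vs * t) := by
  obtain ⟨hx, -, hξ⟩ := hz
  have hT := (lt_div_iff₀ (add_pos hlam hvs)).1 ht.2
  exact upperTriangle_mem_nhds (by nlinarith [ht.1]) (by nlinarith) (by nlinarith [ht.1])

theorem intervalIntegrable_characteristic {c : ℝ → ℝ} {K : ℝ → ℝ → ℝ} (hlam : 0 < lam)
    (hvs : 0 < vs) (hc : Continuous c)
    (hK : ContinuousOn (fun z : ℝ × ℝ => K z.1 z.2) (upperTriangle L))
    (hz : (x, ξ) ∈ upperTriangle L) :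
    IntervalIntegrable (fun t => c (ξ + -vs * t) * K (x + lam * t) (ξ + -vs * t))
      volume 0 ((ξ - x) / (lam + vs)) := by
  refine ContinuousOn.intervalIntegrable_of_Icc
    (div_nonneg (sub_nonneg.2 hz.2.1) (add_pos hlam hvs).le) ?_
  exact (hc.comp (by fun_prop)).continuousOn.mul
    (hK.comp (by fun_prop) fun t ht => characteristic_mem_upperTriangle hlam hvs hz ht)

end Triangle

namespace IsKernelSolOutgoing

variable {L vs lam γp τ : ℝ} {c : ℝ → ℝ} {Kvw Kvv Kvw' Kvv' : ℝ → ℝ → ℝ}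

theorem continuousOn_boundary (h : IsKernelSolOutgoing L vs lam γp τ c Kvw Kvv) :
    ContinuousOn (fun s => Kvw s L) (Icc 0 L) :=
  h.1.continuousOn.comp (continuous_id.prodMk continuous_const).continuousOn
    fun _ hs => ⟨hs.1, hs.2, le_rfl⟩

theorem kvv_eq_of_lt (h : IsKernelSolOutgoing L vs lam γp τ c Kvw Kvv) {x ξ : ℝ}
    (hz : (x, ξ) ∈ upperTriangle L) (hlt : x < ξ) :
    Kvv x ξ = -Real.exp (L / (τ * vs)) * Kvw (x + L - ξ) L := by
  obtain ⟨-, hKvv, -, -, hPDE, -, hBC⟩ := h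
  obtain ⟨hx, -, hξ⟩ : 0 ≤ x ∧ x ≤ ξ ∧ ξ ≤ L := hz
  have hconst := integral_eq_sub_of_directionalDeriv_eq (x := x) (ξ := ξ) (a := 1) (b := 1)
    (f := fun _ => 0) hKvv (sub_nonneg.2 hξ)
    (fun t ht => ⟨by linarith [ht.1], by linarith, by linarith [ht.2]⟩)
    (fun t ht => upperTriangle_mem_nhds (by linarith [ht.1]) (by linarith) (by linarith [ht.2]))
    (fun t ht => by
      simpa using hPDE _ _ ⟨by linarith [ht.1], by linarith, by linarith [ht.2]⟩)
    intervalIntegrable_const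
  rw [← hBC _ ⟨by linarith, by linarith⟩]
  simp only [integral_zero, one_mul, add_sub_cancel] at hconst
  rw [add_sub_assoc]
  linarith

theorem kvv_eq (hL : 0 < L) (h : IsKernelSolOutgoing L vs lam γp τ c Kvw Kvv) {x ξ : ℝ}
    (hz : (x, ξ) ∈ upperTriangle L) :
    Kvv x ξ = -Real.exp (L / (τ * vs)) * Kvw (x + L - ξ) L := by
  have hcont : ContinuousOn (fun z : ℝ × ℝ => -Real.exp (L / (τ * vs)) * Kvw (z.1 + L - z.2) L)
      (upperTriangle L) :=
    continuousOn_const.mul (h.continuousOn_boundary.comp (by fun_prop)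
      fun z ⟨h₀, h₁, h₂⟩ => ⟨by linarith, by linarith⟩)
  refine EqOn.of_subset_closure (fun z hz => h.kvv_eq_of_lt hz.1 hz.2) h.2.1.continuousOn hcont
    inter_subset_left (upperTriangle_subset_closure_offDiag hL) hz

/-- The characteristic `(λ, -v⋆)` from `(x, ξ)` meets the diagonal at parameter
`(ξ - x) / (λ + v⋆)`. -/
theorem kvw_eq (hlam : 0 < lam) (hvs : 0 < vs) (hc : Continuous c)
    (h : IsKernelSolOutgoing L vs lam γp τ c Kvw Kvv) {x ξ : ℝ} (hz : (x, ξ) ∈ upperTriangle L) :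
    Kvw x ξ = c (x + lam * ((ξ - x) / (lam + vs))) / γp
      - ∫ t in 0..(ξ - x) / (lam + vs), c (ξ + -vs * t) * Kvv (x + lam * t) (ξ + -vs * t) := by
  obtain ⟨hKvw, hKvv, -, hPDE, -, hdiag, -⟩ := h
  have hT : 0 ≤ (ξ - x) / (lam + vs) := div_nonneg (sub_nonneg.2 hz.2.1) (add_pos hlam hvs).le
  have hFTC := integral_eq_sub_of_directionalDeriv_eq hKvw hT
    (fun t ht => characteristic_mem_upperTriangle hlam hvs hz ht)
    (fun t ht => upperTriangle_mem_nhds_characteristic hlam hvs hz ht)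
    (fun t ht => by
      rw [← hPDE _ _ (characteristic_mem_upperTriangle hlam hvs hz (Ioo_subset_Icc_self ht))]
      ring)
    (intervalIntegrable_characteristic hlam hvs hc hKvv.continuousOn hz)
  have hmeet : ξ + -vs * ((ξ - x) / (lam + vs)) = x + lam * ((ξ - x) / (lam + vs)) := by
    field_simp
    ring
  have hend := characteristic_mem_upperTriangle hlam hvs hz (right_mem_Icc.2 hT)
  rw [hmeet] at hFTC hend
  rw [hdiag _ ⟨hend.1, hend.2.1.trans hend.2.2⟩] at hFTC
  linarith


/-- On the characteristic from `(x, L)`, `K^{vv}` at parameter `t` is `K^{vw}` at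
`(x + (λ + v⋆) t, L)` up to the factor `-exp (L / (τ v⋆))`, which closes a Volterra
inequality for the trace of `K^{vw}` on `ξ = L`. -/
theorem exists_abs_sub_le_integral (hL : 0 < L) (hlam : 0 < lam) (hvs : 0 < vs)
    (hc : Continuous c) (h : IsKernelSolOutgoing L vs lam γp τ c Kvw Kvv)
    (h' : IsKernelSolOutgoing L vs lam γp τ c Kvw' Kvv') :
    ∃ K : ℝ, ∀ x ∈ Icc 0 L,
      |Kvw x L - Kvw' x L| ≤ K * ∫ s in x..L, |Kvw s L - Kvw' s L| := by
  obtain ⟨C, hC⟩ := isCompact_Icc.exists_bound_of_continuousOn (hc.continuousOn (s := Icc 0 L))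
  refine ⟨Real.exp (L / (τ * vs)) * C / (lam + vs), fun x hx => ?_⟩
  set E := Real.exp (L / (τ * vs))
  set g : ℝ → ℝ := fun s => Kvw s L - Kvw' s L
  have hκ : 0 < lam + vs := add_pos hlam hvs
  have hz : (x, L) ∈ upperTriangle L := ⟨hx.1, hx.2, le_rfl⟩
  have hT : 0 ≤ (L - x) / (lam + vs) := div_nonneg (sub_nonneg.2 hx.2) hκ.le
  have hshift (t : ℝ) (ht : t ∈ Icc 0 ((L - x) / (lam + vs))) :
      x + (lam + vs) * t ∈ Icc 0 L := by
    have := (le_div_iff₀ hκ).1 ht.2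
    exact ⟨by nlinarith [ht.1, hx.1], by linarith⟩
  have hgc : ContinuousOn (fun t => g (x + (lam + vs) * t)) (Icc 0 ((L - x) / (lam + vs))) :=
    (h.continuousOn_boundary.sub h'.continuousOn_boundary).comp (by fun_prop) hshift
  have hrep :
      g x = E * ∫ t in 0..(L - x) / (lam + vs), c (L + -vs * t) * g (x + (lam + vs) * t) := by
    simp only [g]
    rw [h.kvw_eq hlam hvs hc hz, h'.kvw_eq hlam hvs hc hz, sub_sub_sub_cancel_left,
      ← integral_sub (intervalIntegrable_characteristic hlam hvs hc h'.2.1.continuousOn hz)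
        (intervalIntegrable_characteristic hlam hvs hc h.2.1.continuousOn hz),
      ← integral_const_mul]
    refine integral_congr fun t ht => ?_
    rw [uIcc_of_le hT] at ht
    have hmem := characteristic_mem_upperTriangle hlam hvs hz ht
    rw [h.kvv_eq hL hmem, h'.kvv_eq hL hmem,
      show x + lam * t + L - (L + -vs * t) = x + (lam + vs) * t by ring]
    ring
  have hcg (t : ℝ) (ht : t ∈ Icc 0 ((L - x) / (lam + vs))) :
      |c (L + -vs * t) * g (x + (lam + vs) * t)| ≤ C * |g (x + (lam + vs) * t)| := by
    rw [abs_mul]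
    have hmem := characteristic_mem_upperTriangle hlam hvs hz ht
    exact mul_le_mul_of_nonneg_right (hC _ ⟨hmem.1.trans hmem.2.1, hmem.2.2⟩) (abs_nonneg _)
  calc |g x|
      ≤ E * ∫ t in 0..(L - x) / (lam + vs), |c (L + -vs * t) * g (x + (lam + vs) * t)| := by
        rw [hrep, abs_mul, abs_of_pos (Real.exp_pos _)]
        gcongr
        exact abs_integral_le_integral_abs hT
    _ ≤ E * ∫ t in 0..(L - x) / (lam + vs), C * |g (x + (lam + vs) * t)| := by
        gcongr
        exact integral_mono_on hT
          (((hc.comp (by fun_prop)).continuousOn.mul hgc).abs.intervalIntegrable_of_Icc hT)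
          ((continuousOn_const.mul hgc.abs).intervalIntegrable_of_Icc hT) hcg
    _ = E * C / (lam + vs) * ∫ s in x..L, |g s| := by
        rw [integral_const_mul, integral_comp_add_mul (fun s => |g s|) hκ.ne',
          show x + (lam + vs) * ((L - x) / (lam + vs)) = L by field_simp; ring, mul_zero,
          add_zero, smul_eq_mul]
        ring

theorem eq_of_isKernelSolOutgoing (hL : 0 < L) (hlam : 0 < lam) (hvs : 0 < vs)
    (hc : Continuous c) (h : IsKernelSolOutgoing L vs lam γp τ c Kvw Kvv)
    (h' : IsKernelSolOutgoing L vs lam γp τ c Kvw' Kvv') :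
    ∀ z ∈ upperTriangle L, Kvw' z.1 z.2 = Kvw z.1 z.2 ∧ Kvv' z.1 z.2 = Kvv z.1 z.2 := by
  obtain ⟨K, hK⟩ := exists_abs_sub_le_integral hL hlam hvs hc h h'
  have hzero := eq_zero_of_le_mul_integral
    (h.continuousOn_boundary.sub h'.continuousOn_boundary).abs (fun _ _ => abs_nonneg _) hK
  have hbdry (s : ℝ) (hs : s ∈ Icc 0 L) : Kvw' s L = Kvw s L :=
    (sub_eq_zero.1 (abs_eq_zero.1 (hzero s hs))).symm
  have hKvv (x ξ : ℝ) (hz : (x, ξ) ∈ upperTriangle L) : Kvv' x ξ = Kvv x ξ := by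
    have hx : x + L - ξ ∈ Icc 0 L := by
      obtain ⟨h₀, h₁, h₂⟩ := hz
      exact ⟨by linarith, by linarith⟩
    rw [h'.kvv_eq hL hz, h.kvv_eq hL hz, hbdry _ hx]
  refine fun z hz => ⟨?_, hKvv z.1 z.2 hz⟩
  rw [h'.kvw_eq hlam hvs hc hz, h.kvw_eq hlam hvs hc hz]
  congr 1
  refine integral_congr fun t ht => ?_
  rw [uIcc_of_le (div_nonneg (sub_nonneg.2 hz.2.1) (add_pos hlam hvs).le)] at ht
  simp only [hKvv _ _ (characteristic_mem_upperTriangle hlam hvs hz ht)]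

end IsKernelSolOutgoing

/-- `c' = -c / (τ v⋆)` gives the first equation, and `exp (L / (τ v⋆)) c(L) = -1 / τ` the
boundary condition at `ξ = L`. -/
theorem isKernelSolOutgoing_explicit {L vs lam γp τ : ℝ} {c : ℝ → ℝ} (hvs : vs ≠ 0)
    (hτ : τ ≠ 0) (hγp : γp ≠ 0) (hc : ∀ ξ : ℝ, c ξ = -(1 / τ) * Real.exp (-ξ / (τ * vs))) :
    IsKernelSolOutgoing L vs lam γp τ c (fun _ ξ => c ξ / γp) (fun _ _ => 1 / (τ * γp)) := by
  obtain rfl : c = fun ξ => -(1 / τ) * Real.exp (-ξ / (τ * vs)) := funext hc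
  have hKvw : ContDiff ℝ 1 fun z : ℝ × ℝ => -(1 / τ) * Real.exp (-z.2 / (τ * vs)) / γp := by
    fun_prop
  have hderiv (ξ : ℝ) : HasDerivAt (fun ξ => -(1 / τ) * Real.exp (-ξ / (τ * vs)) / γp)
      (Real.exp (-ξ / (τ * vs)) / (τ * (τ * vs) * γp)) ξ := by
    have hlin : HasDerivAt (fun ξ : ℝ => -ξ / (τ * vs)) (-1 / (τ * vs)) ξ :=
      (hasDerivAt_neg ξ).div_const _
    exact ((hlin.exp.const_mul _).div_const γp).congr_deriv (by field_simp)
  refine ⟨hKvw.contDiffOn, contDiffOn_const,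
    exists_bound_of_continuousOn_upperTriangle hKvw.continuous.continuousOn continuousOn_const,
    fun x ξ _ => ?_, fun x ξ _ => by simp, fun x _ => rfl, fun x _ => ?_⟩
  · rw [deriv_const, (hderiv ξ).deriv]
    field_simp
    ring
  · show 1 / (τ * γp) = -Real.exp (L / (τ * vs)) * (-(1 / τ) * Real.exp (-L / (τ * vs)) / γp)
    rw [neg_div, Real.exp_neg]
    field_simp

/-- Well-posedness of the backstepping kernel equations on the outgoing road: the Goursat-type
kernel system on the triangle `T₁` admits a unique bounded continuously differentiable
solution pair. -/
theorem kernel_wellposed_outgoing (L vs lam γ ps τ : ℝ)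
    (hL : 0 < L) (hvs : 0 < vs) (hτ : 0 < τ)
    (hlam : lam = γ * ps - vs) (hlampos : 0 < lam)
    (c : ℝ → ℝ) (hc : ∀ ξ : ℝ, c ξ = -(1 / τ) * Real.exp (-ξ / (τ * vs))) :
    ∃ Kvw Kvv : ℝ → ℝ → ℝ,
      IsKernelSolOutgoing L vs lam (γ * ps) τ c Kvw Kvv ∧
      ∀ Kvw' Kvv' : ℝ → ℝ → ℝ,
        IsKernelSolOutgoing L vs lam (γ * ps) τ c Kvw' Kvv' →
        ∀ z ∈ upperTriangle L,
          Kvw' z.1 z.2 = Kvw z.1 z.2 ∧ Kvv' z.1 z.2 = Kvv z.1 z.2 := by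
  have hγp : γ * ps ≠ 0 := by linarith
  have hc_cont : Continuous c := by
    rw [funext hc]
    fun_prop
  have hsol := isKernelSolOutgoing_explicit (L := L) (lam := lam) hvs.ne' hτ.ne' hγp hc
  exact ⟨_, _, hsol, fun _ _ h' => hsol.eq_of_isKernelSolOutgoing hL hlampos hvs hc_cont h'⟩
end

section
/- Let L > 0, v⋆ > 0, λ = γ p⋆ − v⋆ > 0, τ > 0, and let c(ξ) = −(1/τ)·exp(−ξ/(τ v⋆)). Consider the kernel system on the triangle T₂ = {(x,ξ) ∈ [−L,0]² : ξ ≤ x}: λ ∂_x K^{vw}(x,ξ) − v⋆ ∂_ξ K^{vw}(x,ξ) = c(ξ) K^{vv}(x,ξ), ∂_x K^{vv}(x,ξ) + ∂_ξ K^{vv}(x,ξ) = 0, with boundary conditions K^{vw}(x,x) = −c(x)/(γ p⋆) and K^{vv}(x,−L) = −exp(−L/(τ v⋆)) K^{vw}(x,−L). Then this Goursat-type system admits a unique bounded solution pair (K^{vw}, K^{vv}) that is continuously differentiable on T₂. -/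
/-- The triangular domain `T₂ = {(x,ξ) ∈ [−L,0]² : ξ ≤ x}`. -/
def lowerTriangle (L : ℝ) : Set (ℝ × ℝ) :=
  {z : ℝ × ℝ | -L ≤ z.2 ∧ z.2 ≤ z.1 ∧ z.1 ≤ 0}

/-- `(Kvw, Kvv)` is a bounded, continuously differentiable solution of the Goursat kernel
system on `T₂`: `λ ∂_x K^{vw} − v⋆ ∂_ξ K^{vw} = c(ξ) K^{vv}`, `∂_x K^{vv} + ∂_ξ K^{vv} = 0`,
with `K^{vw}(x,x) = −c(x)/(γ p⋆)` and `K^{vv}(x,−L) = −exp(−L/(τ v⋆)) K^{vw}(x,−L)`. -/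
def IsKernelSolIncoming (L vs lam γp τ : ℝ) (c : ℝ → ℝ) (Kvw Kvv : ℝ → ℝ → ℝ) : Prop :=
  ContDiffOn ℝ 1 (fun z : ℝ × ℝ => Kvw z.1 z.2) (lowerTriangle L) ∧
  ContDiffOn ℝ 1 (fun z : ℝ × ℝ => Kvv z.1 z.2) (lowerTriangle L) ∧
  (∃ M : ℝ, ∀ z ∈ lowerTriangle L, |Kvw z.1 z.2| ≤ M ∧ |Kvv z.1 z.2| ≤ M) ∧
  (∀ x ξ : ℝ, (x, ξ) ∈ lowerTriangle L →
    lam * deriv (fun y => Kvw y ξ) x - vs * deriv (fun z => Kvw x z) ξ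
      = c ξ * Kvv x ξ) ∧
  (∀ x ξ : ℝ, (x, ξ) ∈ lowerTriangle L →
    deriv (fun y => Kvv y ξ) x + deriv (fun z => Kvv x z) ξ = 0) ∧
  (∀ x ∈ Set.Icc (-L) (0 : ℝ), Kvw x x = -(c x / γp)) ∧
  (∀ x ∈ Set.Icc (-L) (0 : ℝ), Kvv x (-L) = -Real.exp (-L / (τ * vs)) * Kvw x (-L))

/-!
The system is linear, so it suffices that the difference `(W, V)` of two solutions vanishes; it
solves the homogeneous system with `W = 0` on the diagonal and `V = -e^{-L/(τ v⋆)} W` on the edge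
`ξ = -L`. Since `V` is transported along the diagonals, `V(x, ξ) = ψ(x - ξ)` with
`ψ t = V(t - L, -L)`. Integrating the `W`-equation along its characteristic from the diagonal to
`(t - L, -L)` gives the Volterra inequality `|ψ t| ≤ M ∫₀ᵗ |ψ|`, so `ψ = 0` by Grönwall; hence
`V = 0`, and then `W = 0` by the same integral along the characteristics. Existence is the explicit
pair `K^{vw}(x, ξ) = e^{-ξ/(τ v⋆)}/(τ γ p⋆)`, `K^{vv} = -1/(τ γ p⋆)`.
-/

open Set Filter Topology MeasureTheory

theorem DifferentiableAt.fderiv_apply_eq_partials {F : ℝ × ℝ → ℝ} {z : ℝ × ℝ}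
    (hF : DifferentiableAt ℝ F z) (v : ℝ × ℝ) :
    fderiv ℝ F z v =
      v.1 * deriv (fun x => F (x, z.2)) z.1 + v.2 * deriv (fun y => F (z.1, y)) z.2 := by
  have h₁ : HasDerivAt (fun x => F (x, z.2)) (fderiv ℝ F z (1, 0)) z.1 :=
    hF.hasFDerivAt.comp_hasDerivAt z.1 ((hasDerivAt_id _).prodMk (hasDerivAt_const _ _))
  have h₂ : HasDerivAt (fun y => F (z.1, y)) (fderiv ℝ F z (0, 1)) z.2 :=
    hF.hasFDerivAt.comp_hasDerivAt z.2 ((hasDerivAt_const _ _).prodMk (hasDerivAt_id _))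
  have hv : v = v.1 • ((1, 0) : ℝ × ℝ) + v.2 • ((0, 1) : ℝ × ℝ) := by simp
  rw [h₁.deriv, h₂.deriv, hv, map_add, map_smul, map_smul]
  simp

theorem eqOn_zero_of_abs_le_mul_integral {f : ℝ → ℝ} {M a b : ℝ}
    (hf : ContinuousOn f (Icc a b)) (h : ∀ t ∈ Icc a b, |f t| ≤ M * ∫ u in a..t, |f u|) :
    EqOn f 0 (Icc a b) := by
  set G : ℝ → ℝ := fun t => ∫ u in a..t, |f u|
  have hf_abs : ContinuousOn (fun u => |f u|) (Icc a b) := hf.abs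
  have hG : ContinuousOn G (Icc a b) := by
    rcases le_or_gt a b with hab | hab
    · simpa [uIcc_of_le hab] using
        intervalIntegral.continuousOn_primitive_interval (hf_abs.integrableOn_Icc.mono_set
          (uIcc_of_le hab).subset)
    · simp [Icc_eq_empty_of_lt hab]
  have hG' : ∀ t ∈ Ico a b, HasDerivWithinAt G |f t| (Ici t) t := by
    intro t ht
    have hnhds : Icc a b ∈ 𝓝[>] t := Icc_mem_nhdsGT_of_mem ht
    exact intervalIntegral.integral_hasDerivWithinAt_right
      ((hf_abs.mono (Icc_subset_Icc le_rfl ht.2.le)).intervalIntegrable_of_Icc ht.1)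
      ⟨Icc a b, hnhds, hf_abs.aestronglyMeasurable measurableSet_Icc⟩
      ((hf_abs t (Ico_subset_Icc_self ht)).mono_of_mem_nhdsWithin hnhds)
  have hGnonneg : ∀ t ∈ Icc a b, 0 ≤ G t := fun t ht =>
    intervalIntegral.integral_nonneg ht.1 fun u _ => abs_nonneg _
  have hG0 := eq_zero_of_abs_deriv_le_mul_abs_self_of_eq_zero_right hG hG'
    intervalIntegral.integral_same (K := M) fun t ht => by
      simpa [abs_of_nonneg (hGnonneg t (Ico_subset_Icc_self ht))] using h t (Ico_subset_Icc_self ht)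
  intro t ht
  have hft := h t ht
  rw [show (∫ u in a..t, |f u|) = 0 from hG0 t ht, mul_zero] at hft
  exact abs_nonpos_iff.mp hft

theorem isCompact_lowerTriangle (L : ℝ) : IsCompact (lowerTriangle L) := by
  have hbox : lowerTriangle L ⊆ Icc (-L) 0 ×ˢ Icc (-L) 0 := fun z ⟨h₁, h₂, h₃⟩ =>
    ⟨⟨by linarith, h₃⟩, ⟨h₁, by linarith⟩⟩
  refine (isCompact_Icc.prod isCompact_Icc).of_isClosed_subset ?_ hbox
  exact (isClosed_le continuous_const continuous_snd).and
    ((isClosed_le continuous_snd continuous_fst).and (isClosed_le continuous_fst continuous_const))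

def strictLowerTriangle (L : ℝ) : Set (ℝ × ℝ) :=
  {z : ℝ × ℝ | -L < z.2 ∧ z.2 < z.1 ∧ z.1 < 0}

theorem isOpen_strictLowerTriangle (L : ℝ) : IsOpen (strictLowerTriangle L) :=
  (isOpen_lt continuous_const continuous_snd).and
    ((isOpen_lt continuous_snd continuous_fst).and (isOpen_lt continuous_fst continuous_const))

theorem strictLowerTriangle_subset (L : ℝ) : strictLowerTriangle L ⊆ lowerTriangle L :=
  fun _ hz => ⟨hz.1.le, hz.2.1.le, hz.2.2.le⟩

theorem lowerTriangle_subset_closure_strictLowerTriangle {L : ℝ} (hL : 0 < L) :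
    lowerTriangle L ⊆ closure (strictLowerTriangle L) := by
  intro z hz
  set z₀ : ℝ × ℝ := (-L / 3, -2 * L / 3)
  have hseg : openSegment ℝ z₀ z ⊆ strictLowerTriangle L := by
    obtain ⟨hz₁, hz₂, hz₃⟩ := hz
    rintro _ ⟨a, b, ha, hb, hab, rfl⟩
    refine ⟨?_, ?_, ?_⟩ <;>
      simp only [z₀, Prod.fst_add, Prod.snd_add, Prod.smul_fst, Prod.smul_snd, smul_eq_mul] <;>
      nlinarith
  exact closure_mono hseg (segment_subset_closure_openSegment (right_mem_segment ℝ z₀ z))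

/- The equations of `IsKernelSolIncoming` in directional-derivative form, imposed only on the open
triangle: on the boundary, `deriv` of the partial maps sees values outside `T₂` and is junk. -/
structure IsHomogeneousKernelSol (L lam vs β : ℝ) (c : ℝ → ℝ) (W V : ℝ × ℝ → ℝ) : Prop where
  continuousOn_W : ContinuousOn W (lowerTriangle L)
  continuousOn_V : ContinuousOn V (lowerTriangle L)
  differentiableAt_W : ∀ z ∈ strictLowerTriangle L, DifferentiableAt ℝ W z
  differentiableAt_V : ∀ z ∈ strictLowerTriangle L, DifferentiableAt ℝ V z
  fderiv_W_apply : ∀ z ∈ strictLowerTriangle L, fderiv ℝ W z (lam, -vs) = c z.2 * V z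
  fderiv_V_apply : ∀ z ∈ strictLowerTriangle L, fderiv ℝ V z (1, 1) = 0
  W_diag : ∀ x ∈ Icc (-L) 0, W (x, x) = 0
  V_bottom : ∀ x ∈ Icc (-L) 0, V (x, -L) = β * W (x, -L)

/- The characteristic of `λ ∂ₓ - v⋆ ∂_ξ` through `z`, parametrised by `x - ξ`. -/
noncomputable def vwCharacteristic (lam vs : ℝ) (z : ℝ × ℝ) (u : ℝ) : ℝ × ℝ :=
  (z.1 + (u - (z.1 - z.2)) * lam / (lam + vs), z.2 - (u - (z.1 - z.2)) * vs / (lam + vs))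

section vwCharacteristic

variable {L lam vs : ℝ} {z : ℝ × ℝ} {u : ℝ}

theorem continuous_vwCharacteristic (lam vs : ℝ) (z : ℝ × ℝ) :
    Continuous (vwCharacteristic lam vs z) := by
  unfold vwCharacteristic; fun_prop

theorem hasDerivAt_vwCharacteristic (lam vs : ℝ) (z : ℝ × ℝ) (u : ℝ) :
    HasDerivAt (vwCharacteristic lam vs z) ((lam + vs)⁻¹ • (lam, -vs)) u := by
  have hlin : HasDerivAt (fun u => u - (z.1 - z.2)) 1 u := (hasDerivAt_id u).sub_const _
  have h₁ := ((hlin.mul_const lam).div_const (lam + vs)).const_add z.1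
  have h₂ := ((hlin.mul_const vs).div_const (lam + vs)).const_sub z.2
  refine (h₁.prodMk h₂).congr_deriv ?_
  ext <;> simp [div_eq_inv_mul]

theorem vwCharacteristic_self : vwCharacteristic lam vs z (z.1 - z.2) = z := by
  simp [vwCharacteristic]

theorem vwCharacteristic_fst_sub_snd (hP : lam + vs ≠ 0) (z : ℝ × ℝ) (u : ℝ) :
    (vwCharacteristic lam vs z u).1 - (vwCharacteristic lam vs z u).2 = u := by
  simp only [vwCharacteristic]; field_simp; ring

theorem vwCharacteristic_mem (hlam : 0 < lam) (hvs : 0 < vs) (hz : z ∈ lowerTriangle L)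
    (hu : u ∈ Icc 0 (z.1 - z.2)) : vwCharacteristic lam vs z u ∈ lowerTriangle L := by
  obtain ⟨hz₁, -, hz₃⟩ := hz
  have hP : 0 < lam + vs := by linarith
  have hd : u - (z.1 - z.2) ≤ 0 := by linarith [hu.2]
  have h₁ : (u - (z.1 - z.2)) * lam / (lam + vs) ≤ 0 :=
    div_nonpos_of_nonpos_of_nonneg (mul_nonpos_of_nonpos_of_nonneg hd hlam.le) hP.le
  have h₂ : (u - (z.1 - z.2)) * vs / (lam + vs) ≤ 0 :=
    div_nonpos_of_nonpos_of_nonneg (mul_nonpos_of_nonpos_of_nonneg hd hvs.le) hP.le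
  have h₃ := vwCharacteristic_fst_sub_snd hP.ne' z u
  simp only [vwCharacteristic] at h₃ ⊢
  exact ⟨by linarith, by linarith [hu.1], by linarith⟩

theorem vwCharacteristic_mem_strict (hlam : 0 < lam) (hvs : 0 < vs) (hz : z ∈ lowerTriangle L)
    (hu : u ∈ Ioo 0 (z.1 - z.2)) : vwCharacteristic lam vs z u ∈ strictLowerTriangle L := by
  obtain ⟨hz₁, -, hz₃⟩ := hz
  have hP : 0 < lam + vs := by linarith
  have hd : u - (z.1 - z.2) < 0 := by linarith [hu.2]
  have h₁ : (u - (z.1 - z.2)) * lam / (lam + vs) < 0 :=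
    div_neg_of_neg_of_pos (mul_neg_of_neg_of_pos hd hlam) hP
  have h₂ : (u - (z.1 - z.2)) * vs / (lam + vs) < 0 :=
    div_neg_of_neg_of_pos (mul_neg_of_neg_of_pos hd hvs) hP
  have h₃ := vwCharacteristic_fst_sub_snd hP.ne' z u
  simp only [vwCharacteristic] at h₃ ⊢
  exact ⟨by linarith, by linarith [hu.1], by linarith⟩

end vwCharacteristic

namespace IsHomogeneousKernelSol

variable {L lam vs β : ℝ} {c : ℝ → ℝ} {W V : ℝ × ℝ → ℝ}

theorem V_eq_V_bottom (h : IsHomogeneousKernelSol L lam vs β c W V) (hL : 0 < L) :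
    ∀ z ∈ lowerTriangle L, V z = V (z.1 - z.2 - L, -L) := by
  have hbottom : MapsTo (fun z : ℝ × ℝ => (z.1 - z.2 - L, -L)) (lowerTriangle L)
      (lowerTriangle L) := fun z ⟨h₁, h₂, h₃⟩ => ⟨le_rfl, by linarith, by linarith⟩
  refine EqOn.of_subset_closure ?_ h.continuousOn_V
    (h.continuousOn_V.comp (by fun_prop) hbottom) (strictLowerTriangle_subset L)
    (lowerTriangle_subset_closure_strictLowerTriangle hL)
  rintro z ⟨hz₁, hz₂, hz₃⟩
  set γ : ℝ → ℝ × ℝ := fun r => z + r • (1, 1)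
  have hγ : ∀ r, HasDerivAt γ (1, 1) r := fun r =>
    (((hasDerivAt_id r).smul_const ((1, 1) : ℝ × ℝ)).const_add z).congr_deriv (one_smul _ _)
  have hmem : MapsTo γ (Icc (-(z.2 + L)) 0) (lowerTriangle L) := fun r ⟨hr₁, hr₂⟩ =>
    ⟨by simp [γ]; linarith, by simp [γ]; linarith, by simp [γ]; linarith⟩
  have hmem' : MapsTo γ (Ioo (-(z.2 + L)) 0) (strictLowerTriangle L) := fun r ⟨hr₁, hr₂⟩ =>
    ⟨by simp [γ]; linarith, by simp [γ]; linarith, by simp [γ]; linarith⟩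
  have hderiv : ∀ r ∈ Ioo (-(z.2 + L)) 0, HasDerivAt (V ∘ γ) 0 r := fun r hr => by
    simpa [h.fderiv_V_apply _ (hmem' hr)] using
      (h.differentiableAt_V _ (hmem' hr)).hasFDerivAt.comp_hasDerivAt r (hγ r)
  have hFTC := intervalIntegral.integral_eq_sub_of_hasDerivAt_of_le (by linarith)
    (h.continuousOn_V.comp (by fun_prop) hmem) hderiv (by simp)
  have hstart : γ (-(z.2 + L)) = (z.1 - z.2 - L, -L) :=
    Prod.ext (by simp [γ]; ring) (by simp [γ])
  have hend : γ 0 = z := by simp [γ]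
  simp only [intervalIntegral.integral_zero, Function.comp, hstart, hend] at hFTC
  exact sub_eq_zero.mp hFTC.symm

theorem W_eq_integral (h : IsHomogeneousKernelSol L lam vs β c W V) (hlam : 0 < lam)
    (hvs : 0 < vs) (hc : ContinuousOn c (Icc (-L) 0)) {z : ℝ × ℝ} (hz : z ∈ lowerTriangle L) :
    W z = (lam + vs)⁻¹ *
      ∫ u in 0..z.1 - z.2, c (vwCharacteristic lam vs z u).2 * V (vwCharacteristic lam vs z u) := by
  set ℓ := vwCharacteristic lam vs z
  have hd : 0 ≤ z.1 - z.2 := sub_nonneg.mpr hz.2.1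
  have hmem : MapsTo ℓ (Icc 0 (z.1 - z.2)) (lowerTriangle L) := fun u hu =>
    vwCharacteristic_mem hlam hvs hz hu
  have hmem' : MapsTo ℓ (Ioo 0 (z.1 - z.2)) (strictLowerTriangle L) := fun u hu =>
    vwCharacteristic_mem_strict hlam hvs hz hu
  have hℓ := continuous_vwCharacteristic lam vs z
  have hsource : ContinuousOn (fun u => c (ℓ u).2 * V (ℓ u)) (Icc 0 (z.1 - z.2)) :=
    (hc.comp (continuous_snd.comp hℓ).continuousOn
      fun u hu => ⟨(hmem hu).1, (hmem hu).2.1.trans (hmem hu).2.2⟩).mul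
    (h.continuousOn_V.comp hℓ.continuousOn hmem)
  have hderiv : ∀ u ∈ Ioo 0 (z.1 - z.2),
      HasDerivAt (W ∘ ℓ) ((lam + vs)⁻¹ * (c (ℓ u).2 * V (ℓ u))) u := fun u hu => by
    have := (h.differentiableAt_W _ (hmem' hu)).hasFDerivAt.comp_hasDerivAt u
      (hasDerivAt_vwCharacteristic lam vs z u)
    rwa [map_smul, h.fderiv_W_apply _ (hmem' hu), smul_eq_mul] at this
  have hFTC := intervalIntegral.integral_eq_sub_of_hasDerivAt_of_le hd
    (h.continuousOn_W.comp hℓ.continuousOn hmem) hderiv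
    ((hsource.intervalIntegrable_of_Icc hd).const_mul _)
  have hW₀ : W (ℓ 0) = 0 := by
    have h₀ := hmem ⟨le_rfl, hd⟩
    have hdiag := vwCharacteristic_fst_sub_snd (by linarith : lam + vs ≠ 0) z 0
    rw [show ℓ 0 = ((ℓ 0).1, (ℓ 0).1) from Prod.ext rfl (by linarith)]
    exact h.W_diag _ ⟨by linarith [h₀.1], h₀.2.2⟩
  rw [intervalIntegral.integral_const_mul] at hFTC
  rw [hFTC]
  change W z = W (ℓ (z.1 - z.2)) - W (ℓ 0)
  rw [hW₀, sub_zero]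
  exact congrArg W vwCharacteristic_self.symm

theorem continuousOn_V_bottom (h : IsHomogeneousKernelSol L lam vs β c W V) :
    ContinuousOn (fun t => V (t - L, -L)) (Icc 0 L) :=
  h.continuousOn_V.comp (by fun_prop) fun t ht => ⟨le_rfl, by linarith [ht.1], by linarith [ht.2]⟩

theorem abs_V_bottom_le (h : IsHomogeneousKernelSol L lam vs β c W V) (hL : 0 < L)
    (hlam : 0 < lam) (hvs : 0 < vs) (hc : ContinuousOn c (Icc (-L) 0)) :
    ∃ M, ∀ t ∈ Icc 0 L, |V (t - L, -L)| ≤ M * ∫ u in 0..t, |V (u - L, -L)| := by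
  obtain ⟨C, hC⟩ := isCompact_Icc.exists_bound_of_continuousOn hc
  refine ⟨|β| * (lam + vs)⁻¹ * C, fun t ht => ?_⟩
  set ℓ := vwCharacteristic lam vs (t - L, -L)
  have hz : (t - L, -L) ∈ lowerTriangle L := ⟨le_rfl, by linarith [ht.1], by linarith [ht.2]⟩
  have hmem : ∀ u ∈ Icc 0 t, ℓ u ∈ lowerTriangle L := fun u hu =>
    vwCharacteristic_mem hlam hvs hz (by simpa using hu)
  have hVℓ : ∀ u ∈ Icc 0 t, V (ℓ u) = V (u - L, -L) := fun u hu => by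
    rw [h.V_eq_V_bottom hL _ (hmem u hu), vwCharacteristic_fst_sub_snd (by linarith) _ _]
  have hψ : ContinuousOn (fun u => |V (u - L, -L)|) (Icc 0 t) :=
    (h.continuousOn_V_bottom.mono (Icc_subset_Icc le_rfl ht.2)).abs
  have hsource : ∀ u ∈ Ioc 0 t, ‖c (ℓ u).2 * V (ℓ u)‖ ≤ C * |V (u - L, -L)| := fun u hu => by
    have hℓu := hmem u (Ioc_subset_Icc_self hu)
    rw [Real.norm_eq_abs, abs_mul, hVℓ u (Ioc_subset_Icc_self hu)]
    exact mul_le_mul_of_nonneg_right (hC _ ⟨hℓu.1, hℓu.2.1.trans hℓu.2.2⟩) (abs_nonneg _)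
  calc |V (t - L, -L)|
      = |β| * (lam + vs)⁻¹ * |∫ u in 0..t, c (ℓ u).2 * V (ℓ u)| := by
        rw [h.V_bottom _ ⟨by linarith [ht.1], by linarith [ht.2]⟩, h.W_eq_integral hlam hvs hc hz,
          show (t - L, -L).1 - (t - L, -L).2 = t by simp, abs_mul, abs_mul, abs_inv,
          abs_of_pos (by linarith : 0 < lam + vs), mul_assoc]
    _ ≤ |β| * (lam + vs)⁻¹ * ∫ u in 0..t, C * |V (u - L, -L)| := by
        gcongr
        exact intervalIntegral.norm_integral_le_of_norm_le ht.1
          (Eventually.of_forall hsource) ((hψ.intervalIntegrable_of_Icc ht.1).const_mul C)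
    _ = |β| * (lam + vs)⁻¹ * C * ∫ u in 0..t, |V (u - L, -L)| := by
        rw [intervalIntegral.integral_const_mul]
        ring

theorem eq_zero (h : IsHomogeneousKernelSol L lam vs β c W V) (hL : 0 < L)
    (hlam : 0 < lam) (hvs : 0 < vs) (hc : ContinuousOn c (Icc (-L) 0)) :
    ∀ z ∈ lowerTriangle L, W z = 0 ∧ V z = 0 := by
  obtain ⟨M, hM⟩ := h.abs_V_bottom_le hL hlam hvs hc
  have hψ := eqOn_zero_of_abs_le_mul_integral h.continuousOn_V_bottom hM
  have hV : ∀ z ∈ lowerTriangle L, V z = 0 := fun z hz => by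
    rw [h.V_eq_V_bottom hL z hz]
    exact hψ ⟨sub_nonneg.mpr hz.2.1, by linarith [hz.1, hz.2.2]⟩
  refine fun z hz => ⟨?_, hV z hz⟩
  rw [h.W_eq_integral hlam hvs hc hz, intervalIntegral.integral_congr (g := fun _ => 0) ?_,
    intervalIntegral.integral_zero, mul_zero]
  intro u hu
  rw [uIcc_of_le (sub_nonneg.mpr hz.2.1)] at hu
  simp [hV _ (vwCharacteristic_mem hlam hvs hz hu)]

end IsHomogeneousKernelSol

theorem ContDiffOn.differentiableAt_of_mem_strictLowerTriangle {F : ℝ × ℝ → ℝ} {L : ℝ}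
    (hF : ContDiffOn ℝ 1 F (lowerTriangle L)) {z : ℝ × ℝ} (hz : z ∈ strictLowerTriangle L) :
    DifferentiableAt ℝ F z :=
  (hF.contDiffAt (mem_of_superset ((isOpen_strictLowerTriangle L).mem_nhds hz)
    (strictLowerTriangle_subset L))).differentiableAt one_ne_zero

namespace IsKernelSolIncoming

variable {L vs lam γp τ : ℝ} {c : ℝ → ℝ} {K₁ K₂ : ℝ → ℝ → ℝ}

theorem fderiv_vw_apply (h : IsKernelSolIncoming L vs lam γp τ c K₁ K₂) {z : ℝ × ℝ}
    (hz : z ∈ strictLowerTriangle L) :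
    fderiv ℝ (fun z : ℝ × ℝ => K₁ z.1 z.2) z (lam, -vs) = c z.2 * K₂ z.1 z.2 := by
  obtain ⟨hK₁, -, -, hpde, -⟩ := h
  rw [(hK₁.differentiableAt_of_mem_strictLowerTriangle hz).fderiv_apply_eq_partials,
    ← hpde z.1 z.2 (strictLowerTriangle_subset L hz)]
  ring

theorem fderiv_vv_apply (h : IsKernelSolIncoming L vs lam γp τ c K₁ K₂) {z : ℝ × ℝ}
    (hz : z ∈ strictLowerTriangle L) :
    fderiv ℝ (fun z : ℝ × ℝ => K₂ z.1 z.2) z (1, 1) = 0 := by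
  obtain ⟨-, hK₂, -, -, hpde, -⟩ := h
  rw [(hK₂.differentiableAt_of_mem_strictLowerTriangle hz).fderiv_apply_eq_partials,
    ← hpde z.1 z.2 (strictLowerTriangle_subset L hz)]
  ring

theorem isHomogeneousKernelSol_sub {K₁' K₂' : ℝ → ℝ → ℝ}
    (h : IsKernelSolIncoming L vs lam γp τ c K₁ K₂)
    (h' : IsKernelSolIncoming L vs lam γp τ c K₁' K₂') :
    IsHomogeneousKernelSol L lam vs (-Real.exp (-L / (τ * vs))) c
      (fun z => K₁ z.1 z.2 - K₁' z.1 z.2) (fun z => K₂ z.1 z.2 - K₂' z.1 z.2) := by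
  have ⟨hK₁, hK₂, _, _, _, hdiag, hbottom⟩ := h
  have ⟨hK₁', hK₂', _, _, _, hdiag', hbottom'⟩ := h'
  exact
    { continuousOn_W := (hK₁.sub hK₁').continuousOn
      continuousOn_V := (hK₂.sub hK₂').continuousOn
      differentiableAt_W := fun _ hz => (hK₁.differentiableAt_of_mem_strictLowerTriangle hz).sub
        (hK₁'.differentiableAt_of_mem_strictLowerTriangle hz)
      differentiableAt_V := fun _ hz => (hK₂.differentiableAt_of_mem_strictLowerTriangle hz).sub
        (hK₂'.differentiableAt_of_mem_strictLowerTriangle hz)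
      fderiv_W_apply := fun _ hz => by
        rw [fderiv_fun_sub (hK₁.differentiableAt_of_mem_strictLowerTriangle hz)
          (hK₁'.differentiableAt_of_mem_strictLowerTriangle hz), sub_apply,
          h.fderiv_vw_apply hz, h'.fderiv_vw_apply hz, mul_sub]
      fderiv_V_apply := fun _ hz => by
        rw [fderiv_fun_sub (hK₂.differentiableAt_of_mem_strictLowerTriangle hz)
          (hK₂'.differentiableAt_of_mem_strictLowerTriangle hz), sub_apply,
          h.fderiv_vv_apply hz, h'.fderiv_vv_apply hz, sub_zero]
      W_diag := fun x hx => by simp only [hdiag x hx, hdiag' x hx, sub_self]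
      V_bottom := fun x hx => by
        simp only [hbottom x hx, hbottom' x hx]
        ring }

end IsKernelSolIncoming

theorem isKernelSolIncoming_explicit {L vs lam γp τ : ℝ} {c : ℝ → ℝ} (hvs : vs ≠ 0)
    (hc : ∀ ξ, c ξ = -(1 / τ) * Real.exp (-ξ / (τ * vs))) :
    IsKernelSolIncoming L vs lam γp τ c (fun _ ξ => Real.exp (-ξ / (τ * vs)) / (τ * γp))
      (fun _ _ => -(1 / (τ * γp))) := by
  have hK₁ : ContDiff ℝ 1 (fun z : ℝ × ℝ => Real.exp (-z.2 / (τ * vs)) / (τ * γp)) := by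
    fun_prop
  refine ⟨hK₁.contDiffOn, contDiffOn_const, ?_, fun x ξ _ => ?_, fun x ξ _ => by simp,
    fun x _ => by rw [hc]; ring, fun x _ => ?_⟩
  · obtain ⟨M, hM⟩ := (isCompact_lowerTriangle L).exists_bound_of_continuousOn
      (hK₁.continuous.prodMk (continuous_const (y := -(1 / (τ * γp))))).continuousOn
    exact ⟨M, fun z hz => norm_prod_le_iff.mp (hM z hz)⟩
  · have hξ : HasDerivAt (fun ξ => Real.exp (-ξ / (τ * vs)) / (τ * γp))
        (Real.exp (-ξ / (τ * vs)) * (-1 / (τ * vs)) / (τ * γp)) ξ :=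
      (((hasDerivAt_id ξ).neg.div_const (τ * vs)).exp).div_const _
    rw [deriv_const, hξ.deriv, hc]
    field_simp
    ring
  · simp only [neg_div, neg_neg]
    rw [neg_mul, ← mul_div_assoc, ← Real.exp_add, neg_add_cancel, Real.exp_zero]

theorem kernel_wellposed_incoming_general (L vs lam γ ps τ : ℝ)
    (hL : 0 < L) (hvs : 0 < vs)
    (hlampos : 0 < lam)
    (c : ℝ → ℝ) (hc : ∀ ξ : ℝ, c ξ = -(1 / τ) * Real.exp (-ξ / (τ * vs))) :
    ∃ Kvw Kvv : ℝ → ℝ → ℝ,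
      IsKernelSolIncoming L vs lam (γ * ps) τ c Kvw Kvv ∧
      ∀ Kvw' Kvv' : ℝ → ℝ → ℝ,
        IsKernelSolIncoming L vs lam (γ * ps) τ c Kvw' Kvv' →
        ∀ z ∈ lowerTriangle L,
          Kvw' z.1 z.2 = Kvw z.1 z.2 ∧ Kvv' z.1 z.2 = Kvv z.1 z.2 := by
  have hsol := isKernelSolIncoming_explicit (L := L) (lam := lam) (γp := γ * ps) hvs.ne' hc
  refine ⟨_, _, hsol, fun K₁ K₂ hK z hz => ?_⟩
  have hc_cont : ContinuousOn c (Icc (-L) 0) := by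
    rw [show c = _ from funext hc]
    fun_prop
  obtain ⟨hW, hV⟩ := (hK.isHomogeneousKernelSol_sub hsol).eq_zero hL hlampos hvs hc_cont z hz
  exact ⟨sub_eq_zero.mp hW, sub_eq_zero.mp hV⟩

/-- Well-posedness of the backstepping kernel equations on the incoming road: the Goursat-type
kernel system on the triangle `T₂` admits a unique bounded continuously differentiable
solution pair. -/
theorem kernel_wellposed_incoming (L vs lam γ ps τ : ℝ)
    (hL : 0 < L) (hvs : 0 < vs) (hτ : 0 < τ)
    (hlam : lam = γ * ps - vs) (hlampos : 0 < lam)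
    (c : ℝ → ℝ) (hc : ∀ ξ : ℝ, c ξ = -(1 / τ) * Real.exp (-ξ / (τ * vs))) :
    ∃ Kvw Kvv : ℝ → ℝ → ℝ,
      IsKernelSolIncoming L vs lam (γ * ps) τ c Kvw Kvv ∧
      ∀ Kvw' Kvv' : ℝ → ℝ → ℝ,
        IsKernelSolIncoming L vs lam (γ * ps) τ c Kvw' Kvv' →
        ∀ z ∈ lowerTriangle L,
          Kvw' z.1 z.2 = Kvw z.1 z.2 ∧ Kvv' z.1 z.2 = Kvv z.1 z.2 :=
  kernel_wellposed_incoming_general L vs lam γ ps τ hL hvs hlampos c hc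
end

section
/- Let L > 0; for i = 1,2 let v_i⋆ > 0, λ_i > 0, τ_i > 0, 0 < r₂ ≤ r₁ < 1, and set E_i = exp(−L/(τ_i v_i⋆)), κ_i = L/v_i⋆ + L/λ_i, a = E₂(r₁−r₂)/((1−r₁)r₂) and b = E₁E₂. Assume a + b < 1. Let α₁, β₁ : [0,L]×[0,∞) → ℝ and α₂, β₂ : [−L,0]×[0,∞) → ℝ be continuously differentiable, bounded, and satisfy the target system ∂_t α_i + v_i⋆∂_x α_i = 0, ∂_t β_i − λ_i∂_x β_i = 0, β₁(L,t) = r₁E₁α₁(L,t), α₁(0,t) = α₂(0,t), α₂(−L,t) = (E₂/r₂)β₂(−L,t), β₂(0,t) = (r₂/r₁)β₁(0,t) + ((r₁−r₂)/(1−r₁))α₂(0,t). Then there exist constants C ≥ 0 and μ > 0 such that for all t ≥ 0, the sum of the L² norms ‖α₁(·,t)‖ + ‖β₁(·,t)‖ + ‖α₂(·,t)‖ + ‖β₂(·,t)‖ is at most C e^{−μ t}. -/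
/-!
Along characteristics every field is a delayed copy of its trace at the inflow boundary. Following
the reflections round both roads, the junction trace `f = β₂(0, ·)` satisfies
`f t = a f (t - κ₂) + b f (t - (κ₁ + κ₂))` for `t ≥ κ₁ + κ₂`; since `a, b ≥ 0` and `a + b < 1`,
`|f|` is at most `M θ ^ n` on `[n (κ₁ + κ₂), ∞)` for some `θ < 1`, i.e. it decays exponentially.
The decay then runs down the cascade `β₂ → α₂ → α₁ → β₁`, each field being a copy, delayed by at
most `κ₁ + κ₂`, of a multiple of the previous one's trace, and on an interval of length `L` the
`L²` norm is at most `√L` times the sup norm.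
-/

open Set Real Filter Topology

def IsExpDecaying (μ : ℝ) (f : ℝ → ℝ) : Prop :=
  ∃ C : ℝ, ∀ t, 0 ≤ t → |f t| ≤ C * exp (-μ * t)

def IsUniformlyExpDecayingOn (μ : ℝ) (F : ℝ → ℝ → ℝ) (S : Set ℝ) : Prop :=
  ∃ C : ℝ, ∀ x ∈ S, ∀ t, 0 ≤ t → |F x t| ≤ C * exp (-μ * t)

theorem nonneg_of_abs_le_mul_exp {f : ℝ → ℝ} {μ C : ℝ}
    (hC : ∀ t, 0 ≤ t → |f t| ≤ C * exp (-μ * t)) : 0 ≤ C := by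
  simpa using (abs_nonneg _).trans (hC 0 le_rfl)

namespace IsExpDecaying

variable {μ : ℝ} {f g : ℝ → ℝ}

theorem of_eq_const_mul (hf : IsExpDecaying μ f) {k : ℝ} (hg : ∀ t, 0 ≤ t → g t = k * f t) :
    IsExpDecaying μ g := by
  obtain ⟨C, hC⟩ := hf
  refine ⟨|k| * C, fun t ht => ?_⟩
  rw [hg t ht, abs_mul, mul_assoc]
  exact mul_le_mul_of_nonneg_left (hC t ht) (abs_nonneg k)

theorem add (hf : IsExpDecaying μ f) (hg : IsExpDecaying μ g) :
    IsExpDecaying μ (fun t => f t + g t) := by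
  obtain ⟨C, hC⟩ := hf
  obtain ⟨D, hD⟩ := hg
  refine ⟨C + D, fun t ht => ?_⟩
  calc |f t + g t| ≤ |f t| + |g t| := abs_add_le _ _
    _ ≤ C * exp (-μ * t) + D * exp (-μ * t) := add_le_add (hC t ht) (hD t ht)
    _ = (C + D) * exp (-μ * t) := by ring

theorem exists_nonneg (hf : IsExpDecaying μ f) :
    ∃ C, 0 ≤ C ∧ ∀ t, 0 ≤ t → f t ≤ C * exp (-μ * t) := by
  obtain ⟨C, hC⟩ := hf
  exact ⟨C, nonneg_of_abs_le_mul_exp hC, fun t ht => (le_abs_self _).trans (hC t ht)⟩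

theorem uniformlyOn_of_delay {F : ℝ → ℝ → ℝ} {S : Set ℝ} {d : ℝ → ℝ} {T M : ℝ}
    (hf : IsExpDecaying μ f) (hμ : 0 ≤ μ) (hd : ∀ x ∈ S, 0 ≤ d x ∧ d x ≤ T)
    (hM : ∀ x ∈ S, ∀ t, 0 ≤ t → |F x t| ≤ M)
    (hF : ∀ x ∈ S, ∀ t, d x ≤ t → F x t = f (t - d x)) :
    IsUniformlyExpDecayingOn μ F S := by
  obtain ⟨C, hC⟩ := hf
  have hC0 := nonneg_of_abs_le_mul_exp hC
  refine ⟨(C + M) * exp (μ * T), fun x hx t ht => ?_⟩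
  have hM0 : 0 ≤ M := (abs_nonneg _).trans (hM x hx t ht)
  have hsplit : (C + M) * exp (μ * T) * exp (-μ * t) =
      C * exp (μ * T + -μ * t) + M * exp (μ * T + -μ * t) := by
    rw [exp_add]; ring
  rw [hsplit]
  obtain ⟨hd0, hdT⟩ := hd x hx
  rcases le_or_gt (d x) t with hdt | htd
  · have hexp : exp (-μ * (t - d x)) ≤ exp (μ * T + -μ * t) :=
      exp_le_exp.2 (by nlinarith)
    calc |F x t| = |f (t - d x)| := by rw [hF x hx t hdt]
      _ ≤ C * exp (-μ * (t - d x)) := hC _ (sub_nonneg.2 hdt)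
      _ ≤ C * exp (μ * T + -μ * t) := mul_le_mul_of_nonneg_left hexp hC0
      _ ≤ _ := le_add_of_nonneg_right (by positivity)
  · have hexp : 1 ≤ exp (μ * T + -μ * t) := one_le_exp (by nlinarith)
    calc |F x t| ≤ M := hM x hx t ht
      _ ≤ M * exp (μ * T + -μ * t) := le_mul_of_one_le_right hM0 hexp
      _ ≤ _ := le_add_of_nonneg_left (by positivity)

theorem of_abs_le_mul_pow {M θ T : ℝ} (hθ0 : 0 < θ) (hθ1 : θ ≤ 1) (hT : 0 < T)
    (hf : ∀ n : ℕ, ∀ t, n * T ≤ t → |f t| ≤ M * θ ^ n) :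
    IsExpDecaying (-log θ / T) f := by
  have hM0 : 0 ≤ M := by simpa using (abs_nonneg _).trans (hf 0 0 (by simp))
  refine ⟨M / θ, fun t ht => ?_⟩
  set n := ⌊t / T⌋₊
  have hnT : n * T ≤ t := (le_div_iff₀ hT).1 (Nat.floor_le (div_nonneg ht hT.le))
  have hn : t / T - 1 ≤ n := by linarith [Nat.lt_floor_add_one (t / T)]
  calc |f t| ≤ M * θ ^ n := hf n t hnT
    _ = M * θ ^ (n : ℝ) := by rw [rpow_natCast]
    _ ≤ M * θ ^ (t / T - 1) :=
      mul_le_mul_of_nonneg_left (rpow_le_rpow_of_exponent_ge hθ0 hθ1 hn) hM0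
    _ = M / θ * exp (-(-log θ / T) * t) := by
      rw [rpow_sub hθ0, rpow_one, rpow_def_of_pos hθ0]; ring_nf

end IsExpDecaying

theorem abs_le_mul_pow_of_delay_recurrence {f : ℝ → ℝ} {a b d₁ d₂ T M θ : ℝ}
    (ha : 0 ≤ a) (hb : 0 ≤ b) (hab : a + b ≤ θ) (hT : 0 ≤ T) (hd₁ : d₁ ≤ T) (hd₂ : d₂ ≤ T)
    (hM : ∀ t, 0 ≤ t → |f t| ≤ M)
    (hrec : ∀ t, T ≤ t → f t = a * f (t - d₁) + b * f (t - d₂)) :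
    ∀ n : ℕ, ∀ t, n * T ≤ t → |f t| ≤ M * θ ^ n := by
  intro n
  induction n with
  | zero => simpa using hM
  | succ n ih =>
    intro t ht
    push_cast at ht
    have hnT : 0 ≤ n * T := by positivity
    have hbound : 0 ≤ M * θ ^ n :=
      (abs_nonneg _).trans (ih (n * T) le_rfl)
    calc |f t| = |a * f (t - d₁) + b * f (t - d₂)| := by rw [hrec t (by linarith)]
      _ ≤ a * |f (t - d₁)| + b * |f (t - d₂)| := by
        simpa only [abs_mul, abs_of_nonneg ha, abs_of_nonneg hb] using
          abs_add_le (a * f (t - d₁)) (b * f (t - d₂))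
      _ ≤ a * (M * θ ^ n) + b * (M * θ ^ n) := by
        gcongr
        · exact ih _ (by linarith)
        · exact ih _ (by linarith)
      _ = (a + b) * (M * θ ^ n) := by ring
      _ ≤ θ * (M * θ ^ n) := mul_le_mul_of_nonneg_right hab hbound
      _ = M * θ ^ (n + 1) := by ring

theorem exists_isExpDecaying_of_delay_recurrence {f : ℝ → ℝ} {a b d₁ d₂ T M : ℝ}
    (ha : 0 ≤ a) (hb : 0 ≤ b) (hab : a + b < 1) (hT : 0 < T) (hd₁ : d₁ ≤ T) (hd₂ : d₂ ≤ T)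
    (hM : ∀ t, 0 ≤ t → |f t| ≤ M)
    (hrec : ∀ t, T ≤ t → f t = a * f (t - d₁) + b * f (t - d₂)) :
    ∃ μ, 0 < μ ∧ IsExpDecaying μ f := by
  -- `θ = a + b` itself would need `a + b > 0` for its logarithm
  obtain ⟨θ, hθ0, hθ1, habθ⟩ : ∃ θ, 0 < θ ∧ θ < 1 ∧ a + b ≤ θ :=
    ⟨(1 + (a + b)) / 2, by positivity, by linarith, by linarith⟩
  refine ⟨-log θ / T, div_pos (neg_pos.2 (log_neg hθ0 hθ1)) hT, ?_⟩
  exact IsExpDecaying.of_abs_le_mul_pow hθ0 hθ1.le hT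
    (abs_le_mul_pow_of_delay_recurrence ha hb habθ hT.le hd₁ hd₂ hM hrec)

namespace IsUniformlyExpDecayingOn

variable {μ : ℝ} {F : ℝ → ℝ → ℝ}

theorem isExpDecaying {S : Set ℝ} (hF : IsUniformlyExpDecayingOn μ F S) {x : ℝ} (hx : x ∈ S) :
    IsExpDecaying μ (F x) := by
  obtain ⟨C, hC⟩ := hF
  exact ⟨C, hC x hx⟩

theorem sqrt_integral_sq {A B : ℝ} (hF : IsUniformlyExpDecayingOn μ F (Icc A B)) (hAB : A ≤ B) :
    IsExpDecaying μ (fun t => √(∫ x in A..B, F x t ^ 2)) := by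
  obtain ⟨C, hC⟩ := hF
  refine ⟨√(B - A) * C, fun t ht => ?_⟩
  have hc : 0 ≤ C * exp (-μ * t) := (abs_nonneg _).trans (hC A (left_mem_Icc.2 hAB) t ht)
  -- the norm bound below also covers a non-integrable `F · t`, whose integral is `0`
  have hint : ∫ x in A..B, F x t ^ 2 ≤ (C * exp (-μ * t)) ^ 2 * (B - A) := by
    have := intervalIntegral.norm_integral_le_of_norm_le_const (a := A) (b := B)
      (f := fun x => F x t ^ 2) (C := (C * exp (-μ * t)) ^ 2) fun x hx => by
        rw [uIoc_of_le hAB] at hx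
        simpa only [norm_pow, Real.norm_eq_abs] using
          pow_le_pow_left₀ (abs_nonneg _) (hC x (Ioc_subset_Icc_self hx) t ht) 2
    rw [abs_of_nonneg (sub_nonneg.2 hAB)] at this
    exact (le_abs_self _).trans this
  rw [abs_of_nonneg (sqrt_nonneg _), mul_assoc]
  calc √(∫ x in A..B, F x t ^ 2) ≤ √((C * exp (-μ * t)) ^ 2 * (B - A)) := sqrt_le_sqrt hint
    _ = √(B - A) * (C * exp (-μ * t)) := by
      rw [sqrt_mul (sq_nonneg _), sqrt_sq hc, mul_comm]

end IsUniformlyExpDecayingOn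

theorem hasDerivAt_comp_characteristic {F : ℝ → ℝ → ℝ} {x t c : ℝ}
    (hF : DifferentiableAt ℝ (fun z : ℝ × ℝ => F z.1 z.2) (x, t)) :
    HasDerivAt (fun s => F (x + c * (s - t)) s)
      (deriv (fun s => F x s) t + c * deriv (fun y => F y t) x) t := by
  have hD := hF.hasFDerivAt
  set D := fderiv ℝ (fun z : ℝ × ℝ => F z.1 z.2) (x, t)
  have hx : HasDerivAt (fun y => F y t) (D (1, 0)) x :=
    hD.comp_hasDerivAt (f := fun y => (y, t)) x
      ((hasDerivAt_id' x).prodMk (hasDerivAt_const x t))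
  have ht : HasDerivAt (fun s => F x s) (D (0, 1)) t :=
    hD.comp_hasDerivAt t ((hasDerivAt_const t x).prodMk (hasDerivAt_id' t))
  have hline : HasDerivAt (fun s => (x + c * (s - t), s)) ((c, 1) : ℝ × ℝ) t := by
    refine HasDerivAt.prodMk ?_ (hasDerivAt_id' t)
    simpa using (((hasDerivAt_id t).sub_const t).const_mul c).const_add x
  have hdir : ((c, 1) : ℝ × ℝ) = (0, 1) + c • (1, 0) := by ext <;> simp
  rw [hx.deriv, ht.deriv, ← smul_eq_mul, ← map_smul, ← map_add, ← hdir]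
  exact hD.comp_hasDerivAt_of_eq t hline (by simp)

section Transport

variable {F : ℝ → ℝ → ℝ} {A B c : ℝ}

theorem transport_eq_of_characteristic (hc : c ≠ 0)
    (hF : ContDiffOn ℝ 1 (fun z : ℝ × ℝ => F z.1 z.2) (Icc A B ×ˢ Ici 0))
    (hpde : ∀ x ∈ Icc A B, ∀ t ∈ Ici (0 : ℝ),
      deriv (fun s => F x s) t + c * deriv (fun y => F y t) x = 0)
    {x₁ t₁ t₂ : ℝ} (hx₁ : x₁ ∈ Icc A B) (hx₂ : x₁ + c * (t₂ - t₁) ∈ Icc A B)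
    (ht₁ : 0 ≤ t₁) (ht₁₂ : t₁ ≤ t₂) :
    F (x₁ + c * (t₂ - t₁)) t₂ = F x₁ t₁ := by
  rcases ht₁₂.eq_or_lt with rfl | hlt
  · simp
  set g := fun s => F (x₁ + c * (s - t₁)) s
  have hmem : ∀ s ∈ Icc t₁ t₂, x₁ + c * (s - t₁) ∈ Icc A B := by
    rintro s ⟨hs₁, hs₂⟩
    obtain ⟨hA₁, hB₁⟩ := hx₁
    obtain ⟨hA₂, hB₂⟩ := hx₂
    rcases hc.lt_or_gt with hc | hc <;> constructor <;> nlinarith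
  have hmem' : ∀ s ∈ Ioo t₁ t₂, x₁ + c * (s - t₁) ∈ Ioo A B := by
    rintro s ⟨hs₁, hs₂⟩
    obtain ⟨hA₁, hB₁⟩ := hx₁
    obtain ⟨hA₂, hB₂⟩ := hx₂
    rcases hc.lt_or_gt with hc | hc <;> constructor <;> nlinarith
  have hcont : ContinuousOn g (Icc t₁ t₂) :=
    hF.continuousOn.comp (f := fun s => (x₁ + c * (s - t₁), s)) (by fun_prop)
      fun s hs => ⟨hmem s hs, ht₁.trans hs.1⟩
  have hderiv : ∀ s ∈ Ioo t₁ t₂, HasDerivAt g 0 s := by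
    intro s hs
    have hnhds : Icc A B ×ˢ Ici 0 ∈ 𝓝 (x₁ + c * (s - t₁), s) :=
      prod_mem_nhds (Icc_mem_nhds (hmem' s hs).1 (hmem' s hs).2)
        (Ici_mem_nhds (ht₁.trans_lt hs.1))
    have hline := hasDerivAt_comp_characteristic (c := c)
      ((hF.differentiableOn one_ne_zero).differentiableAt hnhds)
    rw [hpde _ (Ioo_subset_Icc_self (hmem' s hs)) s (ht₁.trans hs.1.le)] at hline
    convert hline using 1
    funext s'
    simp only [g]
    ring_nf
  obtain ⟨s, -, hs⟩ := exists_hasDerivAt_eq_slope g (fun _ => 0) hlt hcont hderiv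
  rw [eq_comm, div_eq_zero_iff, sub_eq_zero, sub_eq_zero] at hs
  simpa [g] using hs.resolve_right hlt.ne'

theorem transport_eq_right (hc : 0 < c)
    (hF : ContDiffOn ℝ 1 (fun z : ℝ × ℝ => F z.1 z.2) (Icc A B ×ˢ Ici 0))
    (hpde : ∀ x ∈ Icc A B, ∀ t ∈ Ici (0 : ℝ),
      deriv (fun s => F x s) t + c * deriv (fun y => F y t) x = 0)
    {x t : ℝ} (hx : x ∈ Icc A B) (ht : (x - A) / c ≤ t) :
    F x t = F A (t - (x - A) / c) := by
  have hxeq : A + c * (t - (t - (x - A) / c)) = x := by field_simp; ring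
  have h := transport_eq_of_characteristic hc.ne' hF hpde (left_mem_Icc.2 (hx.1.trans hx.2))
    (hxeq.symm ▸ hx) (sub_nonneg.2 ht) (sub_le_self _ (div_nonneg (sub_nonneg.2 hx.1) hc.le))
  rwa [hxeq] at h

theorem transport_eq_left (hc : 0 < c)
    (hF : ContDiffOn ℝ 1 (fun z : ℝ × ℝ => F z.1 z.2) (Icc A B ×ˢ Ici 0))
    (hpde : ∀ x ∈ Icc A B, ∀ t ∈ Ici (0 : ℝ),
      deriv (fun s => F x s) t - c * deriv (fun y => F y t) x = 0)
    {x t : ℝ} (hx : x ∈ Icc A B) (ht : (B - x) / c ≤ t) :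
    F x t = F B (t - (B - x) / c) := by
  have hpde' : ∀ x ∈ Icc A B, ∀ t ∈ Ici (0 : ℝ),
      deriv (fun s => F x s) t + -c * deriv (fun y => F y t) x = 0 := fun x hx t ht => by
    rw [neg_mul, ← sub_eq_add_neg]; exact hpde x hx t ht
  have hxeq : B + -c * (t - (t - (B - x) / c)) = x := by field_simp; ring
  have h := transport_eq_of_characteristic (neg_ne_zero.2 hc.ne') hF hpde'
    (right_mem_Icc.2 (hx.1.trans hx.2)) (hxeq.symm ▸ hx) (sub_nonneg.2 ht)
    (sub_le_self _ (div_nonneg (sub_nonneg.2 hx.2) hc.le))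
  rwa [hxeq] at h

theorem IsExpDecaying.uniformlyOn_of_transport_right {μ M : ℝ} (hA : IsExpDecaying μ (F A))
    (hμ : 0 ≤ μ) (hc : 0 < c)
    (hF : ContDiffOn ℝ 1 (fun z : ℝ × ℝ => F z.1 z.2) (Icc A B ×ˢ Ici 0))
    (hpde : ∀ x ∈ Icc A B, ∀ t ∈ Ici (0 : ℝ),
      deriv (fun s => F x s) t + c * deriv (fun y => F y t) x = 0)
    (hM : ∀ x ∈ Icc A B, ∀ t, 0 ≤ t → |F x t| ≤ M) :
    IsUniformlyExpDecayingOn μ F (Icc A B) :=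
  hA.uniformlyOn_of_delay (d := fun x => (x - A) / c) (T := (B - A) / c) hμ
    (fun _ hx => ⟨div_nonneg (sub_nonneg.2 hx.1) hc.le, by gcongr; exact hx.2⟩) hM
    fun _ hx _ ht => transport_eq_right hc hF hpde hx ht

theorem IsExpDecaying.uniformlyOn_of_transport_left {μ M : ℝ} (hB : IsExpDecaying μ (F B))
    (hμ : 0 ≤ μ) (hc : 0 < c)
    (hF : ContDiffOn ℝ 1 (fun z : ℝ × ℝ => F z.1 z.2) (Icc A B ×ˢ Ici 0))
    (hpde : ∀ x ∈ Icc A B, ∀ t ∈ Ici (0 : ℝ),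
      deriv (fun s => F x s) t - c * deriv (fun y => F y t) x = 0)
    (hM : ∀ x ∈ Icc A B, ∀ t, 0 ≤ t → |F x t| ≤ M) :
    IsUniformlyExpDecayingOn μ F (Icc A B) :=
  hB.uniformlyOn_of_delay (d := fun x => (B - x) / c) (T := (B - A) / c) hμ
    (fun _ hx => ⟨div_nonneg (sub_nonneg.2 hx.2) hc.le, by gcongr; exact hx.1⟩) hM
    fun _ hx _ ht => transport_eq_left hc hF hpde hx ht

end Transport

section Reflection

variable {u w : ℝ → ℝ → ℝ} {A B v lam k κ : ℝ}

theorem trace_eq_of_reflection_right (hv : 0 < v) (hlam : 0 < lam) (hAB : A ≤ B)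
    (hu : ContDiffOn ℝ 1 (fun z : ℝ × ℝ => u z.1 z.2) (Icc A B ×ˢ Ici 0))
    (hpdeu : ∀ x ∈ Icc A B, ∀ t ∈ Ici (0 : ℝ),
      deriv (fun s => u x s) t + v * deriv (fun y => u y t) x = 0)
    (hw : ContDiffOn ℝ 1 (fun z : ℝ × ℝ => w z.1 z.2) (Icc A B ×ˢ Ici 0))
    (hpdew : ∀ x ∈ Icc A B, ∀ t ∈ Ici (0 : ℝ),
      deriv (fun s => w x s) t - lam * deriv (fun y => w y t) x = 0)
    (hbc : ∀ t ∈ Ici (0 : ℝ), w B t = k * u B t) (hκ : κ = (B - A) / v + (B - A) / lam) :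
    ∀ t, κ ≤ t → w A t = k * u A (t - κ) := by
  intro t ht
  have hv' : 0 ≤ (B - A) / v := div_nonneg (sub_nonneg.2 hAB) hv.le
  have hlam' : 0 ≤ (B - A) / lam := div_nonneg (sub_nonneg.2 hAB) hlam.le
  rw [transport_eq_left hlam hw hpdew (left_mem_Icc.2 hAB) (by linarith),
    hbc _ (mem_Ici.2 (by linarith)),
    transport_eq_right hv hu hpdeu (right_mem_Icc.2 hAB) (by linarith), hκ, sub_sub, add_comm]

theorem trace_eq_of_reflection_left (hv : 0 < v) (hlam : 0 < lam) (hAB : A ≤ B)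
    (hu : ContDiffOn ℝ 1 (fun z : ℝ × ℝ => u z.1 z.2) (Icc A B ×ˢ Ici 0))
    (hpdeu : ∀ x ∈ Icc A B, ∀ t ∈ Ici (0 : ℝ),
      deriv (fun s => u x s) t + v * deriv (fun y => u y t) x = 0)
    (hw : ContDiffOn ℝ 1 (fun z : ℝ × ℝ => w z.1 z.2) (Icc A B ×ˢ Ici 0))
    (hpdew : ∀ x ∈ Icc A B, ∀ t ∈ Ici (0 : ℝ),
      deriv (fun s => w x s) t - lam * deriv (fun y => w y t) x = 0)
    (hbc : ∀ t ∈ Ici (0 : ℝ), u A t = k * w A t) (hκ : κ = (B - A) / v + (B - A) / lam) :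
    ∀ t, κ ≤ t → u B t = k * w B (t - κ) := by
  intro t ht
  have hv' : 0 ≤ (B - A) / v := div_nonneg (sub_nonneg.2 hAB) hv.le
  have hlam' : 0 ≤ (B - A) / lam := div_nonneg (sub_nonneg.2 hAB) hlam.le
  rw [transport_eq_right hv hu hpdeu (right_mem_Icc.2 hAB) (by linarith),
    hbc _ (mem_Ici.2 (by linarith)),
    transport_eq_left hlam hw hpdew (left_mem_Icc.2 hAB) (by linarith), hκ, sub_sub]

end Reflection

theorem junction_trace_recurrence {α₁ β₁ α₂ β₂ : ℝ → ℝ → ℝ} {r₁ r₂ E₁ E₂ κ₁ κ₂ a b : ℝ}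
    (hr₁ : r₁ ≠ 0) (hr₂ : r₂ ≠ 0) (hκ₁ : 0 ≤ κ₁) (hκ₂ : 0 ≤ κ₂)
    (hβ₁ : ∀ t, κ₁ ≤ t → β₁ 0 t = r₁ * E₁ * α₁ 0 (t - κ₁))
    (hα₂ : ∀ t, κ₂ ≤ t → α₂ 0 t = E₂ / r₂ * β₂ 0 (t - κ₂))
    (hbc₂ : ∀ t ∈ Ici (0 : ℝ), α₁ 0 t = α₂ 0 t)
    (hbc₄ : ∀ t ∈ Ici (0 : ℝ), β₂ 0 t = r₂ / r₁ * β₁ 0 t + (r₁ - r₂) / (1 - r₁) * α₂ 0 t)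
    (ha : a = E₂ * (r₁ - r₂) / ((1 - r₁) * r₂)) (hb : b = E₁ * E₂) :
    ∀ t, κ₁ + κ₂ ≤ t → β₂ 0 t = a * β₂ 0 (t - κ₂) + b * β₂ 0 (t - (κ₁ + κ₂)) := by
  intro t ht
  rw [hbc₄ t (mem_Ici.2 (by linarith)), hβ₁ t (by linarith), hbc₂ _ (mem_Ici.2 (by linarith)),
    hα₂ (t - κ₁) (by linarith), hα₂ t (by linarith), sub_sub, ha, hb]
  field_simp
  ring

theorem target_system_exponential_stability_general
    (L v₁ v₂ lam₁ lam₂ r₁ r₂ τ₁ τ₂ : ℝ)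
    (hL : 0 < L) (hv₁ : 0 < v₁) (hv₂ : 0 < v₂) (hlam₁ : 0 < lam₁) (hlam₂ : 0 < lam₂)
    (hr₂ : 0 < r₂) (hr₂₁ : r₂ ≤ r₁) (hr₁ : r₁ < 1)
    (E₁ E₂ κ₁ κ₂ a b : ℝ)
    (hE₁ : E₁ = Real.exp (-L / (τ₁ * v₁))) (hE₂ : E₂ = Real.exp (-L / (τ₂ * v₂)))
    (hκ₁ : κ₁ = L / v₁ + L / lam₁) (hκ₂ : κ₂ = L / v₂ + L / lam₂)
    (ha : a = E₂ * (r₁ - r₂) / ((1 - r₁) * r₂)) (hb : b = E₁ * E₂)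
    (hstab : a + b < 1)
    (α₁ β₁ α₂ β₂ : ℝ → ℝ → ℝ)
    (hα₁C1 : ContDiffOn ℝ 1 (fun z : ℝ × ℝ => α₁ z.1 z.2) (Set.Icc 0 L ×ˢ Set.Ici 0))
    (hβ₁C1 : ContDiffOn ℝ 1 (fun z : ℝ × ℝ => β₁ z.1 z.2) (Set.Icc 0 L ×ˢ Set.Ici 0))
    (hα₂C1 : ContDiffOn ℝ 1 (fun z : ℝ × ℝ => α₂ z.1 z.2) (Set.Icc (-L) 0 ×ˢ Set.Ici 0))
    (hβ₂C1 : ContDiffOn ℝ 1 (fun z : ℝ × ℝ => β₂ z.1 z.2) (Set.Icc (-L) 0 ×ˢ Set.Ici 0))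
    (hbdd : ∃ M : ℝ, (∀ x ∈ Set.Icc (0 : ℝ) L, ∀ t ∈ Set.Ici (0 : ℝ),
        |α₁ x t| ≤ M ∧ |β₁ x t| ≤ M) ∧
      (∀ x ∈ Set.Icc (-L) (0 : ℝ), ∀ t ∈ Set.Ici (0 : ℝ),
        |α₂ x t| ≤ M ∧ |β₂ x t| ≤ M))
    (hpdeα₁ : ∀ x ∈ Set.Icc (0 : ℝ) L, ∀ t ∈ Set.Ici (0 : ℝ),
      deriv (fun s => α₁ x s) t + v₁ * deriv (fun y => α₁ y t) x = 0)
    (hpdeβ₁ : ∀ x ∈ Set.Icc (0 : ℝ) L, ∀ t ∈ Set.Ici (0 : ℝ),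
      deriv (fun s => β₁ x s) t - lam₁ * deriv (fun y => β₁ y t) x = 0)
    (hpdeα₂ : ∀ x ∈ Set.Icc (-L) (0 : ℝ), ∀ t ∈ Set.Ici (0 : ℝ),
      deriv (fun s => α₂ x s) t + v₂ * deriv (fun y => α₂ y t) x = 0)
    (hpdeβ₂ : ∀ x ∈ Set.Icc (-L) (0 : ℝ), ∀ t ∈ Set.Ici (0 : ℝ),
      deriv (fun s => β₂ x s) t - lam₂ * deriv (fun y => β₂ y t) x = 0)
    (hbc₁ : ∀ t ∈ Set.Ici (0 : ℝ), β₁ L t = r₁ * E₁ * α₁ L t)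
    (hbc₂ : ∀ t ∈ Set.Ici (0 : ℝ), α₁ 0 t = α₂ 0 t)
    (hbc₃ : ∀ t ∈ Set.Ici (0 : ℝ), α₂ (-L) t = E₂ / r₂ * β₂ (-L) t)
    (hbc₄ : ∀ t ∈ Set.Ici (0 : ℝ),
      β₂ 0 t = r₂ / r₁ * β₁ 0 t + (r₁ - r₂) / (1 - r₁) * α₂ 0 t) :
    ∃ C : ℝ, 0 ≤ C ∧ ∃ μ : ℝ, 0 < μ ∧ ∀ t : ℝ, 0 ≤ t →
      Real.sqrt (∫ x in (0:ℝ)..L, (α₁ x t) ^ 2)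
        + Real.sqrt (∫ x in (0:ℝ)..L, (β₁ x t) ^ 2)
        + Real.sqrt (∫ x in (-L)..(0:ℝ), (α₂ x t) ^ 2)
        + Real.sqrt (∫ x in (-L)..(0:ℝ), (β₂ x t) ^ 2)
      ≤ C * Real.exp (-μ * t) := by
  obtain ⟨M, hM₁, hM₂⟩ := hbdd
  have hL' : -L ≤ 0 := neg_nonpos.2 hL.le
  have hE₁pos : 0 < E₁ := hE₁ ▸ exp_pos _
  have hE₂pos : 0 < E₂ := hE₂ ▸ exp_pos _
  have hκ₁pos : 0 < κ₁ := hκ₁ ▸ by positivity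
  have hκ₂pos : 0 < κ₂ := hκ₂ ▸ by positivity
  have hround₁ := trace_eq_of_reflection_right (κ := κ₁) hv₁ hlam₁ hL.le hα₁C1 hpdeα₁ hβ₁C1
    hpdeβ₁ hbc₁ (by rw [hκ₁, sub_zero])
  have hround₂ := trace_eq_of_reflection_left (κ := κ₂) hv₂ hlam₂ hL' hα₂C1 hpdeα₂ hβ₂C1
    hpdeβ₂ hbc₃ (by rw [hκ₂, sub_neg_eq_add, zero_add])
  have hrec := junction_trace_recurrence (hr₂.trans_le hr₂₁).ne' hr₂.ne' hκ₁pos.le hκ₂pos.le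
    hround₁ hround₂ hbc₂ hbc₄ ha hb
  have ha₀ : 0 ≤ a := ha ▸ div_nonneg (mul_nonneg hE₂pos.le (sub_nonneg.2 hr₂₁))
    (mul_nonneg (sub_nonneg.2 hr₁.le) hr₂.le)
  obtain ⟨μ, hμ, hβ₂₀⟩ := exists_isExpDecaying_of_delay_recurrence ha₀ (hb ▸ by positivity)
    hstab (by positivity) (by linarith) le_rfl (fun t ht => (hM₂ 0 ⟨hL', le_rfl⟩ t ht).2) hrec
  have hβ₂ := hβ₂₀.uniformlyOn_of_transport_left hμ.le hlam₂ hβ₂C1 hpdeβ₂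
    fun x hx t ht => (hM₂ x hx t ht).2
  have hα₂ := ((hβ₂.isExpDecaying (left_mem_Icc.2 hL')).of_eq_const_mul hbc₃
    ).uniformlyOn_of_transport_right hμ.le hv₂ hα₂C1 hpdeα₂ fun x hx t ht => (hM₂ x hx t ht).1
  have hα₁ := ((hα₂.isExpDecaying (right_mem_Icc.2 hL')).of_eq_const_mul
    fun t ht => (hbc₂ t ht).trans (one_mul _).symm
    ).uniformlyOn_of_transport_right hμ.le hv₁ hα₁C1 hpdeα₁ fun x hx t ht => (hM₁ x hx t ht).1
  have hβ₁ := ((hα₁.isExpDecaying (right_mem_Icc.2 hL.le)).of_eq_const_mul hbc₁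
    ).uniformlyOn_of_transport_left hμ.le hlam₁ hβ₁C1 hpdeβ₁ fun x hx t ht => (hM₁ x hx t ht).2
  obtain ⟨C, hC, hdecay⟩ := ((((hα₁.sqrt_integral_sq hL.le).add (hβ₁.sqrt_integral_sq hL.le)).add
    (hα₂.sqrt_integral_sq hL')).add (hβ₂.sqrt_integral_sq hL')).exists_nonneg
  exact ⟨C, hC, μ, hμ, hdecay⟩

/-- Exponential `L²` stability of the decoupled target system of transport equations for the
two-road network: under the stability condition `a + b < 1` with
`a = E₂(r₁−r₂)/((1−r₁)r₂)` and `b = E₁E₂`, every bounded continuously differentiable solution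
of the target system decays exponentially to zero in the `L²` norm. -/
theorem target_system_exponential_stability
    (L v₁ v₂ lam₁ lam₂ r₁ r₂ τ₁ τ₂ : ℝ)
    (hL : 0 < L) (hv₁ : 0 < v₁) (hv₂ : 0 < v₂) (hlam₁ : 0 < lam₁) (hlam₂ : 0 < lam₂)
    (hr₂ : 0 < r₂) (hr₂₁ : r₂ ≤ r₁) (hr₁ : r₁ < 1) (hτ₁ : 0 < τ₁) (hτ₂ : 0 < τ₂)
    (E₁ E₂ κ₁ κ₂ a b : ℝ)
    (hE₁ : E₁ = Real.exp (-L / (τ₁ * v₁))) (hE₂ : E₂ = Real.exp (-L / (τ₂ * v₂)))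
    (hκ₁ : κ₁ = L / v₁ + L / lam₁) (hκ₂ : κ₂ = L / v₂ + L / lam₂)
    (ha : a = E₂ * (r₁ - r₂) / ((1 - r₁) * r₂)) (hb : b = E₁ * E₂)
    (hstab : a + b < 1)
    (α₁ β₁ α₂ β₂ : ℝ → ℝ → ℝ)
    (hα₁C1 : ContDiffOn ℝ 1 (fun z : ℝ × ℝ => α₁ z.1 z.2) (Set.Icc 0 L ×ˢ Set.Ici 0))
    (hβ₁C1 : ContDiffOn ℝ 1 (fun z : ℝ × ℝ => β₁ z.1 z.2) (Set.Icc 0 L ×ˢ Set.Ici 0))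
    (hα₂C1 : ContDiffOn ℝ 1 (fun z : ℝ × ℝ => α₂ z.1 z.2) (Set.Icc (-L) 0 ×ˢ Set.Ici 0))
    (hβ₂C1 : ContDiffOn ℝ 1 (fun z : ℝ × ℝ => β₂ z.1 z.2) (Set.Icc (-L) 0 ×ˢ Set.Ici 0))
    (hbdd : ∃ M : ℝ, (∀ x ∈ Set.Icc (0 : ℝ) L, ∀ t ∈ Set.Ici (0 : ℝ),
        |α₁ x t| ≤ M ∧ |β₁ x t| ≤ M) ∧
      (∀ x ∈ Set.Icc (-L) (0 : ℝ), ∀ t ∈ Set.Ici (0 : ℝ),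
        |α₂ x t| ≤ M ∧ |β₂ x t| ≤ M))
    (hpdeα₁ : ∀ x ∈ Set.Icc (0 : ℝ) L, ∀ t ∈ Set.Ici (0 : ℝ),
      deriv (fun s => α₁ x s) t + v₁ * deriv (fun y => α₁ y t) x = 0)
    (hpdeβ₁ : ∀ x ∈ Set.Icc (0 : ℝ) L, ∀ t ∈ Set.Ici (0 : ℝ),
      deriv (fun s => β₁ x s) t - lam₁ * deriv (fun y => β₁ y t) x = 0)
    (hpdeα₂ : ∀ x ∈ Set.Icc (-L) (0 : ℝ), ∀ t ∈ Set.Ici (0 : ℝ),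
      deriv (fun s => α₂ x s) t + v₂ * deriv (fun y => α₂ y t) x = 0)
    (hpdeβ₂ : ∀ x ∈ Set.Icc (-L) (0 : ℝ), ∀ t ∈ Set.Ici (0 : ℝ),
      deriv (fun s => β₂ x s) t - lam₂ * deriv (fun y => β₂ y t) x = 0)
    (hbc₁ : ∀ t ∈ Set.Ici (0 : ℝ), β₁ L t = r₁ * E₁ * α₁ L t)
    (hbc₂ : ∀ t ∈ Set.Ici (0 : ℝ), α₁ 0 t = α₂ 0 t)
    (hbc₃ : ∀ t ∈ Set.Ici (0 : ℝ), α₂ (-L) t = E₂ / r₂ * β₂ (-L) t)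
    (hbc₄ : ∀ t ∈ Set.Ici (0 : ℝ),
      β₂ 0 t = r₂ / r₁ * β₁ 0 t + (r₁ - r₂) / (1 - r₁) * α₂ 0 t) :
    ∃ C : ℝ, 0 ≤ C ∧ ∃ μ : ℝ, 0 < μ ∧ ∀ t : ℝ, 0 ≤ t →
      Real.sqrt (∫ x in (0:ℝ)..L, (α₁ x t) ^ 2)
        + Real.sqrt (∫ x in (0:ℝ)..L, (β₁ x t) ^ 2)
        + Real.sqrt (∫ x in (-L)..(0:ℝ), (α₂ x t) ^ 2)
        + Real.sqrt (∫ x in (-L)..(0:ℝ), (β₂ x t) ^ 2)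
      ≤ C * Real.exp (-μ * t) :=
  target_system_exponential_stability_general L v₁ v₂ lam₁ lam₂ r₁ r₂ τ₁ τ₂ hL hv₁ hv₂ hlam₁ hlam₂
    hr₂ hr₂₁ hr₁ E₁ E₂ κ₁ κ₂ a b hE₁ hE₂ hκ₁ hκ₂ ha hb hstab α₁ β₁ α₂ β₂ hα₁C1 hβ₁C1 hα₂C1 hβ₂C1
    hbdd hpdeα₁ hpdeβ₁ hpdeα₂ hpdeβ₂ hbc₁ hbc₂ hbc₃ hbc₄
end
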